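/- arXiv:math/0509575 — 5 statements merged into one kernel-verified Lean document; each statement's English description precedes it below -/
import Mathlib

section
/- Let T be a finite tree with edge lengths d : E → ℝ₊, let u,v be two leaves of T, and fix γ > 0. For all ε > 0 and M > 0 there exists a constant c = c(ε,M,γ) > 0 such that: if d(u,v) < M and σ¹,…,σᵏ are k i.i.d. characters of the CFN model on T with k ≥ c·log n (for any integer n ≥ 2), then with probability at least 1 − n^{−γ} the distance estimator satisfies |d(u,v) − Dist(σ_u,σ_v)| < ε. -/
/-!
Reparametrising a configuration on a tree by its state at one vertex and the agreement bits of
its edges turns the CFN weight into a product of independent edge factors; hence the products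
`σ_u σ_v` of the samples are i.i.d. signs with mean `θ = e^{-2 d(u,v)}`, the product of the
agreement signs along the path. A Chernoff bound puts the empirical mean `A` within `δ` of `θ`
except with probability `2 e^{-kδ²/4}`, which is at most `n^{-γ}` once `k ≥ 4(γ+1) log n / δ²`.
As `θ > e^{-2M}`, the choice `δ = e^{-2M}/2 · min 1 ε` keeps `A` above `e^{-2M}/2`, where `log`
is `2e^{2M}`-Lipschitz, so `-½ log A` is within `ε` of `d(u,v) = -½ log θ`.
-/

open scoped Classical

/-- The ±1 spin value of a Boolean state. -/
def pmVal (b : Bool) : ℝ := if b then 1 else -1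

/-- The per-edge CFN factor: along an edge with correlation `c = e^{−2d(e)}`,
two equal endpoint states get weight `(1+c)/2` and unequal states `(1−c)/2`. -/
noncomputable def cfnEdgeFactor {V : Type*} (σ : V → Bool) (c : ℝ) : Sym2 V → ℝ :=
  Sym2.lift ⟨fun x y => if σ x = σ y then (1 + c) / 2 else (1 - c) / 2,
    fun x y => by
      simp only []
      by_cases h : σ x = σ y
      · rw [if_pos h, if_pos h.symm]
      · rw [if_neg h, if_neg fun hh => h hh.symm]⟩

/-- The CFN probability of a full state assignment `σ : V → Bool` on the tree
`G` with edge lengths `d`. -/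
noncomputable def cfnWeight {V : Type*} [Fintype V] (G : SimpleGraph V)
    (d : Sym2 V → ℝ) (σ : V → Bool) : ℝ :=
  (1 / 2) * ∏ e ∈ (Set.toFinite G.edgeSet).toFinset,
      cfnEdgeFactor σ (Real.exp (-2 * d e)) e

open Finset Real

section IidProb

variable {Ω : Type*} [Fintype Ω] {w : Ω → ℝ} {k : ℕ}

noncomputable def iidProb (w : Ω → ℝ) (k : ℕ) (P : (Fin k → Ω) → Prop) [DecidablePred P] : ℝ :=
  ∑ xs : Fin k → Ω, (∏ t, w (xs t)) * if P xs then 1 else 0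

theorem sum_prod_iid (hw1 : ∑ x, w x = 1) : ∑ xs : Fin k → Ω, ∏ t, w (xs t) = 1 := by
  rw [← Fintype.sum_pow, hw1, one_pow]

theorem iidProb_not (hw1 : ∑ x, w x = 1) (P : (Fin k → Ω) → Prop) [DecidablePred P] :
    iidProb w k (fun xs => ¬ P xs) = 1 - iidProb w k P := by
  rw [iidProb, iidProb, eq_sub_iff_add_eq, ← sum_add_distrib]
  refine (sum_congr rfl fun xs _ => ?_).trans (sum_prod_iid hw1)
  split_ifs <;> ring

theorem iidProb_mono (hw : ∀ x, 0 ≤ w x) {P Q : (Fin k → Ω) → Prop} [DecidablePred P]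
    [DecidablePred Q] (h : ∀ xs, P xs → Q xs) : iidProb w k P ≤ iidProb w k Q :=
  sum_le_sum fun xs _ => mul_le_mul_of_nonneg_left (by split_ifs <;> simp_all)
    (prod_nonneg fun t _ => hw _)

theorem iidProb_or_le (hw : ∀ x, 0 ≤ w x) (P Q : (Fin k → Ω) → Prop) [DecidablePred P]
    [DecidablePred Q] :
    iidProb w k (fun xs => P xs ∨ Q xs) ≤ iidProb w k P + iidProb w k Q := by
  rw [iidProb, iidProb, iidProb, ← sum_add_distrib]
  refine sum_le_sum fun xs _ => ?_
  rw [← mul_add]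
  exact mul_le_mul_of_nonneg_left (by split_ifs <;> simp_all) (prod_nonneg fun t _ => hw _)

theorem iidProb_le_exp_neg_mul_pow (hw : ∀ x, 0 ≤ w x) (Y : Ω → ℝ) (b : ℝ) :
    iidProb w k (fun xs => b ≤ ∑ t, Y (xs t)) ≤ exp (-b) * (∑ x, w x * exp (Y x)) ^ k := by
  have indicator_le (xs : Fin k → Ω) :
      (if b ≤ ∑ t, Y (xs t) then 1 else 0 : ℝ) ≤ exp (∑ t, Y (xs t) - b) := by
    split_ifs with h
    · exact one_le_exp (sub_nonneg.2 h)
    · exact (exp_pos _).le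
  calc iidProb w k (fun xs => b ≤ ∑ t, Y (xs t))
      ≤ ∑ xs : Fin k → Ω, (∏ t, w (xs t)) * exp (∑ t, Y (xs t) - b) :=
        sum_le_sum fun xs _ =>
          mul_le_mul_of_nonneg_left (indicator_le xs) (prod_nonneg fun t _ => hw _)
    _ = exp (-b) * ∑ xs : Fin k → Ω, ∏ t, w (xs t) * exp (Y (xs t)) := by
        rw [mul_sum]
        refine sum_congr rfl fun xs _ => ?_
        rw [prod_mul_distrib, ← exp_sum, sub_eq_add_neg, exp_add]
        ring
    _ = exp (-b) * (∑ x, w x * exp (Y x)) ^ k := by rw [Fintype.sum_pow]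

theorem sum_mul_exp_le (hw : ∀ x, 0 ≤ w x) (hw1 : ∑ x, w x = 1) {X : Ω → ℝ}
    (hX : ∀ x, |X x| ≤ 1) {θ : ℝ} (hθ : ∑ x, w x * X x = θ) {s : ℝ} (hs : |s| ≤ 1) :
    ∑ x, w x * exp (s * X x) ≤ exp (s * θ + s ^ 2) := by
  have exp_le (x : Ω) : exp (s * X x) ≤ 1 + s * X x + s ^ 2 := by
    have hsX : |s * X x| ≤ 1 := by
      rw [abs_mul]; exact mul_le_one₀ hs (abs_nonneg _) (hX x)
    have hsq : (s * X x) ^ 2 ≤ s ^ 2 := by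
      rw [mul_pow]
      exact mul_le_of_le_one_right (sq_nonneg s) (sq_le_one_iff_abs_le_one _ |>.2 (hX x))
    linarith [(abs_le.1 (abs_exp_sub_one_sub_id_le hsX)).2]
  calc ∑ x, w x * exp (s * X x) ≤ ∑ x, w x * (1 + s * X x + s ^ 2) :=
        sum_le_sum fun x _ => mul_le_mul_of_nonneg_left (exp_le x) (hw x)
    _ = ∑ x, w x + s * ∑ x, w x * X x + s ^ 2 * ∑ x, w x := by
        simp only [mul_sum, ← sum_add_distrib]
        exact sum_congr rfl fun x _ => by ring
    _ = s * θ + s ^ 2 + 1 := by rw [hw1, hθ]; ring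
    _ ≤ exp (s * θ + s ^ 2) := add_one_le_exp _

theorem iidProb_mul_add_le_sum_le (hw : ∀ x, 0 ≤ w x) (hw1 : ∑ x, w x = 1) {X : Ω → ℝ}
    (hX : ∀ x, |X x| ≤ 1) {θ : ℝ} (hθ : ∑ x, w x * X x = θ) {δ : ℝ} (hδ0 : 0 ≤ δ)
    (hδ2 : δ ≤ 2) :
    iidProb w k (fun xs => k * (θ + δ) ≤ ∑ t, X (xs t)) ≤ exp (-(k * δ ^ 2 / 4)) := by
  -- exponential Markov inequality at the optimal parameter `δ / 2`
  have hs : |δ / 2| ≤ 1 := abs_le.2 ⟨by linarith, by linarith⟩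
  calc iidProb w k (fun xs => k * (θ + δ) ≤ ∑ t, X (xs t))
      ≤ iidProb w k (fun xs => δ / 2 * (k * (θ + δ)) ≤ ∑ t, δ / 2 * X (xs t)) :=
        iidProb_mono hw fun xs h => by
          rw [← mul_sum]; exact mul_le_mul_of_nonneg_left h (by positivity)
    _ ≤ exp (-(δ / 2 * (k * (θ + δ)))) * (∑ x, w x * exp (δ / 2 * X x)) ^ k :=
        iidProb_le_exp_neg_mul_pow hw (fun x => δ / 2 * X x) _
    _ ≤ exp (-(δ / 2 * (k * (θ + δ)))) * exp (δ / 2 * θ + (δ / 2) ^ 2) ^ k := by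
        gcongr
        · exact sum_nonneg fun x _ => mul_nonneg (hw x) (exp_pos _).le
        · exact sum_mul_exp_le hw hw1 hX hθ hs
    _ = exp (-(k * δ ^ 2 / 4)) := by
        rw [← exp_nat_mul, ← exp_add]
        ring_nf

theorem iidProb_le_abs_sub_le (hw : ∀ x, 0 ≤ w x) (hw1 : ∑ x, w x = 1) {X : Ω → ℝ}
    (hX : ∀ x, |X x| ≤ 1) {θ : ℝ} (hθ : ∑ x, w x * X x = θ) (hk : 0 < k) {δ : ℝ}
    (hδ0 : 0 ≤ δ) (hδ2 : δ ≤ 2) :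
    iidProb w k (fun xs => δ ≤ |1 / (k : ℝ) * ∑ t, X (xs t) - θ|)
      ≤ 2 * exp (-(k * δ ^ 2 / 4)) := by
  have hX' : ∀ x, |-X x| ≤ 1 := fun x => (abs_neg (X x)).symm ▸ hX x
  have hθ' : ∑ x, w x * -X x = -θ := by simp only [mul_neg, sum_neg_distrib, hθ]
  calc iidProb w k (fun xs => δ ≤ |1 / (k : ℝ) * ∑ t, X (xs t) - θ|)
      ≤ iidProb w k (fun xs => k * (θ + δ) ≤ ∑ t, X (xs t) ∨
          k * (-θ + δ) ≤ ∑ t, -X (xs t)) := by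
        refine iidProb_mono hw fun xs h => ?_
        have hsum : k * (1 / (k : ℝ) * ∑ t, X (xs t)) = ∑ t, X (xs t) := by
          field_simp [(Nat.cast_pos.2 hk).ne']
        rw [sum_neg_distrib]
        rcases le_abs'.1 h with h | h
        · right; nlinarith
        · left; nlinarith
    _ ≤ _ := iidProb_or_le hw _ _
    _ ≤ 2 * exp (-(k * δ ^ 2 / 4)) := by
        linarith [iidProb_mul_add_le_sum_le hw hw1 hX hθ (k := k) hδ0 hδ2,
          iidProb_mul_add_le_sum_le hw hw1 hX' hθ' (k := k) hδ0 hδ2]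

end IidProb

theorem abs_log_sub_log_le_div {m a b : ℝ} (hm : 0 < m) (ha : m ≤ a) (hb : m ≤ b) :
    |log a - log b| ≤ |a - b| / m := by
  wlog h : b ≤ a generalizing a b
  · rw [abs_sub_comm, abs_sub_comm a b]; exact this hb ha (le_of_not_ge h)
  have ha0 : 0 < a := hm.trans_le ha
  have hb0 : 0 < b := hm.trans_le hb
  rw [abs_of_nonneg (sub_nonneg.2 (log_le_log hb0 h)), abs_of_nonneg (sub_nonneg.2 h),
    ← log_div ha0.ne' hb0.ne']
  calc log (a / b) ≤ a / b - 1 := log_le_sub_one_of_pos (div_pos ha0 hb0)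
    _ = (a - b) / b := by field_simp
    _ ≤ (a - b) / m := div_le_div_of_nonneg_left (by linarith) hm hb

theorem abs_sub_neg_half_log_lt_of_abs_sub_exp_lt {D M ε A : ℝ} (hDM : D < M) (hε : 0 < ε)
    (hA : |A - exp (-2 * D)| < exp (-2 * M) / 2 * min 1 ε) :
    0 < A ∧ |D - -(1 / 2 * log A)| < ε := by
  set q := exp (-2 * M)
  have hq : 0 < q := exp_pos _
  have hqθ : q < exp (-2 * D) := exp_lt_exp.2 (by linarith)
  have hmin : min 1 ε ≤ 1 := min_le_left 1 ε
  have hqA : q / 2 ≤ A := by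
    nlinarith [(abs_lt.1 hA).1, mul_le_mul_of_nonneg_left hmin (by positivity : 0 ≤ q / 2)]
  refine ⟨by linarith, ?_⟩
  have hlog : |log A - log (exp (-2 * D))| < min 1 ε :=
    calc |log A - log (exp (-2 * D))| ≤ |A - exp (-2 * D)| / (q / 2) :=
          abs_log_sub_log_le_div (by positivity) hqA (by linarith)
      _ < min 1 ε := by rw [div_lt_iff₀ (by positivity)]; linarith
  rw [log_exp] at hlog
  rw [show D - -(1 / 2 * log A) = 1 / 2 * (log A - -2 * D) by ring, abs_mul,
    abs_of_pos one_half_pos]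
  linarith [min_le_right 1 ε]

theorem two_mul_exp_neg_le_rpow_neg {n γ x : ℝ} (hn : 2 ≤ n) (hx : (γ + 1) * log n ≤ x) :
    2 * exp (-x) ≤ n ^ (-γ) := by
  have hn0 : 0 < n := by linarith
  calc 2 * exp (-x) ≤ 2 * exp (-((γ + 1) * log n)) := by gcongr
    _ = 2 / n * n ^ (-γ) := by
        rw [rpow_def_of_pos hn0, show -((γ + 1) * log n) = log n * -γ + -log n by ring,
          exp_add, exp_neg, exp_log hn0]
        ring
    _ ≤ n ^ (-γ) := mul_le_of_le_one_left (by positivity) ((div_le_one hn0).2 hn)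

section CFN

variable {V : Type*} {G : SimpleGraph V}

def agree (σ : V → Bool) : Sym2 V → Bool :=
  Sym2.lift ⟨fun x y => σ x == σ y, fun _ _ => Bool.beq_comm⟩

theorem pmVal_mul_pmVal (a b : Bool) : pmVal a * pmVal b = pmVal (a == b) := by
  cases a <;> cases b <;> norm_num [pmVal]

theorem abs_pmVal_mul_pmVal_le_one (a b : Bool) : |pmVal a * pmVal b| ≤ 1 := by
  cases a <;> cases b <;> norm_num [pmVal]

theorem pmVal_beq_eq_prod_walk (σ : V → Bool) {a b : V} (w : G.Walk a b) :
    pmVal (σ a == σ b) = (w.edges.map fun e => pmVal (agree σ e)).prod := by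
  induction w with
  | nil => simp [pmVal]
  | @cons u v w _ q ih =>
      rw [SimpleGraph.Walk.edges_cons, List.map_cons, List.prod_cons, ← ih]
      change pmVal (σ u == σ w) = pmVal (σ u == σ v) * pmVal (σ v == σ w)
      cases σ u <;> cases σ v <;> cases σ w <;> norm_num [pmVal]

theorem cfnEdgeFactor_eq_ite (σ : V → Bool) (c : ℝ) (e : Sym2 V) :
    cfnEdgeFactor σ c e = if agree σ e then (1 + c) / 2 else (1 - c) / 2 := by
  induction e using Sym2.ind with
  | _ x y => simp [cfnEdgeFactor, agree]

variable [Fintype V]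

theorem cfnWeight_nonneg {d : Sym2 V → ℝ} (hd : ∀ e ∈ G.edgeSet, 0 ≤ d e)
    (σ : V → Bool) : 0 ≤ cfnWeight G d σ := by
  refine mul_nonneg one_half_pos.le (prod_nonneg fun e he => ?_)
  have hc : exp (-2 * d e) ≤ 1 :=
    exp_le_one_iff.2 (by linarith [hd e ((Set.Finite.mem_toFinset _).1 he)])
  rw [cfnEdgeFactor_eq_ite]
  split_ifs <;> linarith [exp_pos (-2 * d e)]

variable [DecidableEq V]

theorem SimpleGraph.IsTree.bijective_root_agree (hT : G.IsTree) (u₀ : V) :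
    Function.Bijective fun σ : V → Bool => (σ u₀, fun e : G.edgeSet => agree σ e) := by
  rw [Fintype.bijective_iff_injective_and_card]
  constructor
  · intro σ σ' h
    simp only [Prod.mk.injEq, funext_iff, Subtype.forall] at h
    funext v
    obtain ⟨w⟩ := hT.connected.preconnected u₀ v
    have hpm : pmVal (σ u₀ == σ v) = pmVal (σ' u₀ == σ' v) := by
      rw [pmVal_beq_eq_prod_walk σ w, pmVal_beq_eq_prod_walk σ' w]
      exact congrArg List.prod (List.map_congr_left fun e he =>
        by rw [h.2 e (w.edges_subset_edgeSet he)])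
    revert hpm
    rw [h.1]
    cases σ' u₀ <;> cases σ v <;> cases σ' v <;> norm_num [pmVal]
  · rw [Fintype.card_prod, Fintype.card_fun, Fintype.card_fun, Fintype.card_bool,
      ← SimpleGraph.edgeFinset_card, ← hT.card_edgeFinset, pow_succ']

theorem SimpleGraph.IsTree.sum_prod_agree (hT : G.IsTree) (g : Sym2 V → Bool → ℝ) :
    ∑ σ : V → Bool, ∏ e ∈ (Set.toFinite G.edgeSet).toFinset, g e (agree σ e) =
      2 * ∏ e ∈ (Set.toFinite G.edgeSet).toFinset, (g e true + g e false) := by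
  obtain ⟨u₀⟩ := hT.connected.nonempty
  have hE (e : Sym2 V) : e ∈ (Set.toFinite G.edgeSet).toFinset ↔ e ∈ G.edgeSet :=
    Set.Finite.mem_toFinset _
  simp only [prod_subtype _ hE]
  rw [Fintype.sum_bijective _ (hT.bijective_root_agree u₀) _
    (fun y => ∏ e : G.edgeSet, g e (y.2 e)) fun σ => rfl]
  simp only [Fintype.sum_prod_type, ← Fintype.prod_sum, Fintype.sum_bool]
  ring

theorem sum_cfnWeight (hT : G.IsTree) (d : Sym2 V → ℝ) :
    ∑ σ : V → Bool, cfnWeight G d σ = 1 := by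
  simp only [cfnWeight, ← mul_sum, cfnEdgeFactor_eq_ite]
  rw [hT.sum_prod_agree fun e b =>
    if b then (1 + exp (-2 * d e)) / 2 else (1 - exp (-2 * d e)) / 2]
  rw [prod_eq_one fun e _ => by simp only [if_true, Bool.false_eq_true, if_false]; ring]
  norm_num

theorem sum_cfnWeight_mul_pmVal (hT : G.IsTree) (d : Sym2 V → ℝ) {u v : V} {p : G.Walk u v}
    (hp : p.IsPath) :
    ∑ σ : V → Bool, cfnWeight G d σ * (pmVal (σ u) * pmVal (σ v)) =
      exp (-2 * (p.edges.map d).sum) := by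
  set E := (Set.toFinite G.edgeSet).toFinset
  set P := p.edges.toFinset
  have hPE : E ∩ P = P := inter_eq_right.2 fun e he =>
    (Set.Finite.mem_toFinset _).2 (p.edges_subset_edgeSet (List.mem_toFinset.1 he))
  set c : Sym2 V → ℝ := fun e => exp (-2 * d e)
  -- along the path the sign `σ_u σ_v` factors over the edges, so it joins the edge weights
  set g : Sym2 V → Bool → ℝ := fun e b =>
    (if b then (1 + c e) / 2 else (1 - c e) / 2) * if e ∈ P then pmVal b else 1
  have hσ (σ : V → Bool) :
      cfnWeight G d σ * (pmVal (σ u) * pmVal (σ v)) = 1 / 2 * ∏ e ∈ E, g e (agree σ e) := by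
    have hsign :
        pmVal (σ u) * pmVal (σ v) = ∏ e ∈ E, if e ∈ P then pmVal (agree σ e) else 1 := by
      rw [prod_ite_mem, hPE, pmVal_mul_pmVal, pmVal_beq_eq_prod_walk σ p,
        List.prod_toFinset _ hp.edges_nodup]
    rw [hsign, cfnWeight, mul_assoc, ← prod_mul_distrib]
    simp only [cfnEdgeFactor_eq_ite, g, c]
    rfl
  have hg (e : Sym2 V) : g e true + g e false = if e ∈ P then c e else 1 := by
    by_cases he : e ∈ P <;> simp [g, he, pmVal] <;> ring
  rw [sum_congr rfl fun σ _ => hσ σ, ← mul_sum, hT.sum_prod_agree, ← mul_assoc,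
    one_div_mul_cancel two_ne_zero, one_mul]
  rw [prod_congr rfl fun e _ => hg e, prod_ite_mem, hPE, ← exp_sum, ← mul_sum,
    List.sum_toFinset _ hp.edges_nodup]

end CFN

/-- The probability of an event is the i.i.d. product weight summed over the `k`-tuples of full
assignments in it; positivity of the empirical correlation says exactly that `Dist ≠ +∞`. -/
theorem distance_estimate_accuracy
    (γ : ℝ) (hγ : 0 < γ) :
    ∀ ε > (0 : ℝ), ∀ M > (0 : ℝ), ∃ c > (0 : ℝ),
      ∀ (V : Type) [Fintype V] [DecidableEq V] (G : SimpleGraph V),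
        G.IsTree →
        ∀ (d : Sym2 V → ℝ), (∀ e ∈ G.edgeSet, 0 ≤ d e) →
        ∀ (u v : V),
          (G.neighborSet u).ncard = 1 → (G.neighborSet v).ncard = 1 →
          ∀ (p : G.Walk u v), p.IsPath → (p.edges.map d).sum < M →
          ∀ (n k : ℕ), 2 ≤ n → c * Real.log n ≤ k →
            (1 : ℝ) - (n : ℝ) ^ (-γ) ≤
              ∑ xs : Fin k → (V → Bool),
                (∏ t, cfnWeight G d (xs t)) *
                  (if 0 < (1 / (k : ℝ)) * ∑ t, pmVal (xs t u) * pmVal (xs t v) ∧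
                      |(p.edges.map d).sum -
                        -((1 / 2) *
                          Real.log ((1 / (k : ℝ)) * ∑ t, pmVal (xs t u) * pmVal (xs t v)))| < ε
                   then 1 else 0) := by
  intro ε hε M hM
  set δ := exp (-2 * M) / 2 * min 1 ε with hδ
  have hδ0 : 0 < δ := by positivity
  have hδ2 : δ ≤ 2 := by
    have : exp (-2 * M) ≤ 1 := exp_le_one_iff.2 (by linarith)
    nlinarith [min_le_left 1 ε, exp_pos (-2 * M)]
  refine ⟨4 * (γ + 1) / δ ^ 2, by positivity, ?_⟩
  intro V _ _ G hT d hd u v _ _ p hp hpM n k hn hk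
  set D := (p.edges.map d).sum
  have hlogn : 0 < log n := log_pos (by exact_mod_cast hn)
  have hk0 : 0 < k := Nat.cast_pos.1 (lt_of_lt_of_le (by positivity) hk)
  have hdev := iidProb_le_abs_sub_le (cfnWeight_nonneg hd) (sum_cfnWeight hT d)
    (fun σ => abs_pmVal_mul_pmVal_le_one (σ u) (σ v)) (sum_cfnWeight_mul_pmVal hT d hp) hk0
    hδ0.le hδ2
  have htail : 2 * exp (-(k * δ ^ 2 / 4)) ≤ (n : ℝ) ^ (-γ) := by
    refine two_mul_exp_neg_le_rpow_neg (by exact_mod_cast hn) ?_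
    calc (γ + 1) * log n = 4 * (γ + 1) / δ ^ 2 * log n * (δ ^ 2 / 4) := by field_simp
      _ ≤ k * δ ^ 2 / 4 := by
        linarith [mul_le_mul_of_nonneg_right hk (by positivity : (0 : ℝ) ≤ δ ^ 2 / 4)]
  calc (1 : ℝ) - (n : ℝ) ^ (-γ)
      ≤ 1 - iidProb (cfnWeight G d) k fun xs =>
          δ ≤ |1 / (k : ℝ) * ∑ t, pmVal (xs t u) * pmVal (xs t v) - exp (-2 * D)| := by
        linarith
    _ = iidProb (cfnWeight G d) k fun xs =>
          ¬ δ ≤ |1 / (k : ℝ) * ∑ t, pmVal (xs t u) * pmVal (xs t v) - exp (-2 * D)| :=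
        (iidProb_not (sum_cfnWeight hT d) _).symm
    _ ≤ _ := iidProb_mono (cfnWeight_nonneg hd) fun xs hxs =>
          abs_sub_neg_half_log_lt_of_abs_sub_exp_lt hpM hε (not_le.1 hxs)
end

section
/- Let 0 < d ≤ M and ε > 0, and let X_1,…,X_k be i.i.d. random variables with values in {−1,+1} and E[X_1] = e^{−2d}. Then P[ (1/k)·Σ_{t=1}^k X_t < e^{−2(d+ε)} ] ≤ exp( −(k/8)·(1 − e^{−2ε})²·e^{−4M} ). Consequently, the estimator D̂ := −(1/2)·ln( max(0, (1/k)Σ_t X_t) ) (interpreted as +∞ when the average is ≤ 0) satisfies P[ D̂ > d + ε ] ≤ exp( −(k/8)·(1 − e^{−2ε})²·e^{−4M} ). -/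
open MeasureTheory ProbabilityTheory

open Real in
set_option maxHeartbeats 800000 in
lemma cfn_key {m g : ℝ} (hg0 : 0 < g) (hg1 : g ≤ 1) (hm0 : 0 ≤ m) (hm1 : m ≤ 1) :
    (exp g + exp (-g)) / 2 - m * ((exp g - exp (-g)) / 2)
      ≤ exp (-(g * m) + 7 * g ^ 2 / 8) := by
  have hg3 : g^3 ≤ g^2 := by nlinarith
  have hg4 : g^4 ≤ g^3 := by nlinarith
  have hg5 : g^5 ≤ g^4 := by nlinarith
  have hg6 : g^6 ≤ g^5 := by nlinarith
  have hg7 : g^7 ≤ g^6 := by nlinarith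
  set E := exp g with hE
  set F := exp (-g) with hF
  have hE6 : E ≤ 1 + g^2/2 + g^4/24 + 7*g^6/4320 + (g + g^3/6 + g^5/120) := by
    have h := Real.exp_bound' hg0.le hg1 (n := 6) (by norm_num)
    norm_num [Finset.sum_range_succ, Nat.factorial] at h
    rw [hE]; nlinarith [h]
  have hF6 : |F - (1 - g + g^2/2 - g^3/6 + g^4/24 - g^5/120)| ≤ g^6 * (7/4320) := by
    have h := Real.exp_bound (x := -g) (by rw [abs_neg, abs_of_pos hg0]; exact hg1)
      (n := 6) (by norm_num)
    norm_num [Finset.sum_range_succ, Nat.factorial, abs_neg, abs_of_pos hg0] at h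
    rw [hF]; convert h using 2; ring
  have hF6u := (abs_sub_le_iff.1 hF6).1
  have hF6l := (abs_sub_le_iff.1 hF6).2
  have hE5 : 1 + g + g^2/2 + g^3/6 + g^4/24 ≤ E := by
    have h := Real.sum_le_exp_of_nonneg hg0.le 5
    norm_num [Finset.sum_range_succ, Nat.factorial] at h
    rw [hE]; nlinarith [h]
  have hF5 : |F - (1 - g + g^2/2 - g^3/6 + g^4/24)| ≤ g^5 * (1/100) := by
    have h := Real.exp_bound (x := -g) (by rw [abs_neg, abs_of_pos hg0]; exact hg1)
      (n := 5) (by norm_num)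
    norm_num [Finset.sum_range_succ, Nat.factorial, abs_neg, abs_of_pos hg0] at h
    rw [hF]; convert h using 2; ring
  have hF5u := (abs_sub_le_iff.1 hF5).1
  have hF1 : 1 - g ≤ F := by rw [hF]; have := Real.add_one_le_exp (-g); linarith
  set C := (E + F) / 2 with hC
  set Sh := (E - F) / 2 with hSh
  have hCu : C ≤ 1 + g^2/2 + g^4/24 + 14*g^6/4320 := by rw [hC]; linarith
  have hCl : 1 + g^2/4 ≤ C := by rw [hC]; linarith
  have hC0 : 0 < C := by nlinarith [hCl]
  have hShl : g + g^3/6 - g^5/200 ≤ Sh := by rw [hSh]; linarith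
  have hShu : Sh ≤ g + g^3/6 + g^5/120 + g^6*(7/4320) := by rw [hSh]; linarith
  have hmul1 : g * C ≤ g * (1 + g^2/2 + g^4/24 + 14*g^6/4320) :=
    mul_le_mul_of_nonneg_left hCu hg0.le
  have hmul2 : 3*g^2/8 * (1 + g^2/4) ≤ 3*g^2/8 * C :=
    mul_le_mul_of_nonneg_left hCl (by positivity)
  have hmul3 : g * (1 + g^2/4) ≤ g * C := mul_le_mul_of_nonneg_left hCl hg0.le
  have hStepC : g * C - Sh ≤ 3*g^2/8 * C := by nlinarith [hmul1, hmul2, hShl]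
  have hgCSh : Sh ≤ g * C := by nlinarith [hShu, hmul3]
  have hmm := mul_le_of_le_one_left (sub_nonneg.2 hgCSh) hm1
  have hmain : m * g * C - 3*g^2/8 * C ≤ m * Sh := by nlinarith [hmm, hStepC]
  have hCexp : C ≤ exp (g^2/2) := by
    have hq := Real.quadratic_le_exp_of_nonneg (show (0:ℝ) ≤ g^2/2 by positivity)
    nlinarith [hCu, hq]
  have hdiv : m * g - 3*g^2/8 ≤ m * Sh / C := by
    rw [le_div_iff₀ hC0]; nlinarith [hmain]
  calc C - m * Sh = C * (1 - m * Sh / C) := by field_simp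
    _ ≤ C * exp (-(m * Sh / C)) := by
        have h1 := Real.add_one_le_exp (-(m * Sh / C))
        nlinarith [hC0, h1]
    _ ≤ exp (g^2/2) * exp (-(m * Sh / C)) :=
        mul_le_mul_of_nonneg_right hCexp (exp_nonneg _)
    _ ≤ exp (g^2/2) * exp (-(m*g - 3*g^2/8)) :=
        mul_le_mul_of_nonneg_left (exp_le_exp.2 (neg_le_neg hdiv)) (exp_nonneg _)
    _ = exp (-(g * m) + 7 * g ^ 2 / 8) := by rw [← exp_add]; congr 1; ring

set_option maxHeartbeats 1000000 in
/-- **One-sided concentration of the empirical CFN correlation (short distances).**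
Let `X₁,…,X_k` be i.i.d. ±1-valued random variables with mean `E[X₁] = e^{−2d}`,
where `0 < d ≤ M`. Then for every `ε > 0`,
`P[(1/k)·Σ X_t < e^{−2(d+ε)}] ≤ exp(−(k/8)(1−e^{−2ε})² e^{−4M})`.
Consequently, the distance estimator `D̂ = −(1/2)ln(max(0,(1/k)Σ X_t))`
(interpreted as `+∞` when the empirical average is `≤ 0`, which is encoded by
including `{average ≤ 0}` in the event below) satisfies
`P[D̂ > d + ε] ≤ exp(−(k/8)(1−e^{−2ε})² e^{−4M})`. -/
theorem cfn_distance_overestimate_bound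
    {Ω : Type*} [MeasurableSpace Ω] (μ : Measure Ω) [IsProbabilityMeasure μ]
    (d M ε : ℝ) (hd : 0 < d) (hdM : d ≤ M) (hε : 0 < ε)
    (k : ℕ) (hk : 0 < k) (X : Fin k → Ω → ℝ)
    (hmeas : ∀ t, Measurable (X t))
    (hval : ∀ t ω, X t ω = 1 ∨ X t ω = -1)
    (hindep : iIndepFun X μ)
    (hident : ∀ t, IdentDistrib (X t) (X ⟨0, hk⟩) μ μ)
    (hmean : (∫ ω, X ⟨0, hk⟩ ω ∂μ) = Real.exp (-2 * d)) :
    μ {ω | (1 / (k : ℝ)) * ∑ t, X t ω < Real.exp (-2 * (d + ε))}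
      ≤ ENNReal.ofReal
          (Real.exp (-((k : ℝ) / 8) * (1 - Real.exp (-2 * ε)) ^ 2 * Real.exp (-4 * M)))
    ∧
    μ {ω | (1 / (k : ℝ)) * ∑ t, X t ω ≤ 0 ∨
            (0 < (1 / (k : ℝ)) * ∑ t, X t ω ∧
              d + ε < -(1 / 2) * Real.log ((1 / (k : ℝ)) * ∑ t, X t ω))}
      ≤ ENNReal.ofReal
          (Real.exp (-((k : ℝ) / 8) * (1 - Real.exp (-2 * ε)) ^ 2 * Real.exp (-4 * M))) := by
  have main : μ {ω | (1 / (k : ℝ)) * ∑ t, X t ω < Real.exp (-2 * (d + ε))}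
      ≤ ENNReal.ofReal
          (Real.exp (-((k : ℝ) / 8) * (1 - Real.exp (-2 * ε)) ^ 2 * Real.exp (-4 * M))) := by
    set m : ℝ := Real.exp (-2 * d) with hm_def
    set g : ℝ := m * (1 - Real.exp (-2 * ε)) with hg_def
    have hm0 : 0 < m := Real.exp_pos _
    have hm1 : m < 1 := by
      rw [hm_def]; exact Real.exp_lt_one_iff.2 (by linarith)
    have he1 : Real.exp (-2 * ε) < 1 := Real.exp_lt_one_iff.2 (by linarith)
    have he0 : 0 < Real.exp (-2 * ε) := Real.exp_pos _
    have hg0 : 0 < g := by rw [hg_def]; exact mul_pos hm0 (by linarith)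
    have hg1 : g ≤ 1 := by nlinarith
    have hgm : g < m := by nlinarith
    have hXabs : ∀ i ω, |X i ω| ≤ 1 := by
      intro i ω; rcases hval i ω with h | h <;> rw [h] <;> norm_num
    have hXint : ∀ i, Integrable (X i) μ := by
      intro i
      exact (integrable_const (1:ℝ)).mono' (hmeas i).aestronglyMeasurable
        (ae_of_all _ fun ω => by rw [Real.norm_eq_abs]; exact hXabs i ω)
    have hSabs : ∀ ω, |∑ t, X t ω| ≤ k := by
      intro ω
      calc |∑ t, X t ω| ≤ ∑ t, |X t ω| := Finset.abs_sum_le_sum_abs _ _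
        _ ≤ ∑ _t : Fin k, (1:ℝ) := Finset.sum_le_sum fun i _ => hXabs i ω
        _ = k := by simp
    -- Chernoff bound
    have h_int_sum : Integrable (fun ω => Real.exp (-g * ∑ t, X t ω)) μ := by
      refine (integrable_const (Real.exp (g * k))).mono'
        (Measurable.aestronglyMeasurable ?_) (ae_of_all _ fun ω => ?_)
      · exact (Measurable.const_mul (Finset.measurable_sum _ fun i _ => hmeas i) (-g)).exp
      · rw [Real.norm_eq_abs, Real.abs_exp]
        apply Real.exp_le_exp.2
        have := hSabs ω
        have := abs_le.1 this
        nlinarith [this.1, this.2, hg0]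
    have chern := measure_le_le_exp_mul_mgf (μ := μ) (X := fun ω => ∑ t, X t ω)
      ((k : ℝ) * (m - g)) (neg_nonpos.2 hg0.le) h_int_sum
    -- compute the mgf
    set C : ℝ := (Real.exp g + Real.exp (-g)) / 2 with hC_def
    set Sh : ℝ := (Real.exp g - Real.exp (-g)) / 2 with hSh_def
    have hsingle : ∀ i, mgf (X i) μ (-g) = C - m * Sh := by
      intro i
      have hcomp : (∫ ω, Real.exp (-g * X i ω) ∂μ) = ∫ ω, Real.exp (-g * X ⟨0, hk⟩ ω) ∂μ :=
        ((hident i).comp (Real.measurable_exp.comp (measurable_id.const_mul (-g)))).integral_eq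
      have hpt : ∀ ω, Real.exp (-g * X ⟨0, hk⟩ ω) = C - Sh * X ⟨0, hk⟩ ω := by
        intro ω
        rcases hval ⟨0, hk⟩ ω with h | h <;> rw [h] <;>
          simp only [hC_def, hSh_def] <;> ring
      have : (∫ ω, Real.exp (-g * X ⟨0, hk⟩ ω) ∂μ) = C - Sh * m := by
        rw [integral_congr_ae (ae_of_all _ hpt)]
        rw [integral_sub (integrable_const C) ((hXint ⟨0, hk⟩).const_mul Sh)]
        rw [integral_const, integral_const_mul, hmean]
        simp
      unfold mgf
      rw [hcomp] at *
      rw [this]; ring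
    have hmgf : mgf (fun ω => ∑ t, X t ω) μ (-g) = (C - m * Sh) ^ k := by
      have hfun : (fun ω => ∑ t, X t ω) = ∑ t, X t := by
        funext ω; rw [Finset.sum_apply]
      rw [hfun, hindep.mgf_sum hmeas Finset.univ]
      rw [Finset.prod_congr rfl fun i _ => hsingle i, Finset.prod_const]
      simp
    rw [hmgf] at chern
    -- numeric chain
    have hkey := cfn_key hg0 hg1 hm0.le hm1.le
    have hpos : 0 ≤ C - m * Sh := by
      have hSh0 : 0 ≤ Sh := by
        rw [hSh_def]
        have : Real.exp (-g) ≤ Real.exp g := Real.exp_le_exp.2 (by linarith)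
        linarith
      have : C - Sh = Real.exp (-g) := by rw [hC_def, hSh_def]; ring
      nlinarith [Real.exp_pos (-g), hSh0, hm1.le]
    have hCmSh : C - m * Sh ≤ Real.exp (-(g*m) + 7*g^2/8) := by
      have := hkey
      rw [hC_def, hSh_def]
      linarith [this]
    have hrhs : Real.exp (-(-g) * ((k:ℝ) * (m - g))) * (C - m*Sh)^k
        ≤ Real.exp (-(k:ℝ) * g^2 / 8) := by
      calc Real.exp (-(-g) * ((k:ℝ) * (m - g))) * (C - m*Sh)^k
          ≤ Real.exp (-(-g) * ((k:ℝ) * (m - g))) * (Real.exp (-(g*m) + 7*g^2/8))^k := by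
            apply mul_le_mul_of_nonneg_left (pow_le_pow_left₀ hpos hCmSh k) (Real.exp_nonneg _)
        _ = Real.exp (-(-g) * ((k:ℝ) * (m - g)) + (k:ℝ) * (-(g*m) + 7*g^2/8)) := by
            rw [← Real.exp_nat_mul, ← Real.exp_add]
        _ = Real.exp (-(k:ℝ) * g^2 / 8) := by congr 1; ring
    have hbound1 : (μ {ω | (∑ t, X t ω) ≤ (k:ℝ) * (m - g)}).toReal
        ≤ Real.exp (-((k : ℝ) / 8) * (1 - Real.exp (-2 * ε)) ^ 2 * Real.exp (-4 * M)) := by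
      refine (chern.trans hrhs).trans (Real.exp_le_exp.2 ?_)
      -- -(k)*g^2/8 ≤ -(k/8)*(1-e^{-2ε})^2*e^{-4M}
      have hmM : Real.exp (-2 * M) ≤ m := by
        rw [hm_def]; exact Real.exp_le_exp.2 (by linarith)
      have hc : Real.exp (-2*M) * (1 - Real.exp (-2*ε)) ≤ g := by
        rw [hg_def]
        apply mul_le_mul_of_nonneg_right hmM (by linarith)
      have hc0 : 0 ≤ Real.exp (-2*M) * (1 - Real.exp (-2*ε)) := mul_nonneg (Real.exp_pos _).le (by linarith)
      have hexp2 : Real.exp (-4*M) = (Real.exp (-2*M))^2 := by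
        rw [sq, ← Real.exp_add]; congr 1; ring
      have hsq : Real.exp (-4*M) * (1 - Real.exp (-2*ε))^2 ≤ g^2 := by
        rw [hexp2]; nlinarith [hc, hc0]
      have hk0 : (0:ℝ) ≤ k := Nat.cast_nonneg k
      nlinarith [mul_le_mul_of_nonneg_left hsq hk0]
    -- event inclusion + ofReal
    have hsub : {ω | (1 / (k : ℝ)) * ∑ t, X t ω < Real.exp (-2 * (d + ε))}
        ⊆ {ω | (∑ t, X t ω) ≤ (k:ℝ) * (m - g)} := by
      intro ω hω
      simp only [Set.mem_setOf_eq] at hω ⊢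
      have hθ : Real.exp (-2 * (d + ε)) = m - g := by
        have h1 : m - g = m * Real.exp (-2*ε) := by rw [hg_def]; ring
        rw [h1, hm_def, ← Real.exp_add]; congr 1; ring
      rw [hθ] at hω
      have hk' : (0:ℝ) < k := by exact_mod_cast hk
      have := (mul_lt_mul_iff_right₀ hk').2 hω
      rw [← mul_assoc, mul_one_div_cancel hk'.ne', one_mul] at this
      linarith
    calc μ {ω | (1 / (k : ℝ)) * ∑ t, X t ω < Real.exp (-2 * (d + ε))}
        ≤ μ {ω | (∑ t, X t ω) ≤ (k:ℝ) * (m - g)} := measure_mono hsub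
      _ ≤ ENNReal.ofReal (Real.exp (-((k : ℝ) / 8) * (1 - Real.exp (-2 * ε)) ^ 2 * Real.exp (-4 * M))) := by
          rw [← ENNReal.ofReal_toReal (measure_ne_top μ _)]
          exact ENNReal.ofReal_le_ofReal hbound1
  refine ⟨main, le_trans (measure_mono ?_) main⟩
  intro ω hω
  simp only [Set.mem_setOf_eq] at hω ⊢
  rcases hω with h | ⟨hpos, hlog⟩
  · exact lt_of_le_of_lt h (Real.exp_pos _)
  · rw [← Real.exp_log hpos]
    apply Real.exp_lt_exp.2
    linarith
end

section
/- Let G be a finite tree with nonnegative edge weights w, and for vertices u,v let D(u,v) denote the sum of w(e) over the edges e of the unique path from u to v. Then D satisfies the four-point condition: for any four vertices v₁, w₁, v₂, w₂ of G, the maximum of the three sums D(v₁,w₁)+D(v₂,w₂), D(v₁,v₂)+D(w₁,w₂), D(v₁,w₂)+D(w₁,v₂) is attained by at least two of them. -/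
open SimpleGraph

namespace FourPointAux

variable {V : Type*} {G : SimpleGraph V}

/-- The "side" of a vertex `x` relative to an edge `e`: whether `x` is reachable from the
first canonical endpoint of `e` after deleting `e`. -/
noncomputable def side (G : SimpleGraph V) (e : Sym2 V) (x : V) : Bool :=
  @decide ((G.deleteEdges {e}).Reachable e.out.1 x) (Classical.propDecidable _)

lemma side_eq_of_reachable {e : Sym2 V} {x y : V}
    (h : (G.deleteEdges {e}).Reachable x y) : side G e x = side G e y := by
  unfold side
  exact decide_eq_decide.mpr ⟨fun h1 => h1.trans h, fun h2 => h2.trans h.symm⟩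

lemma side_true {e : Sym2 V} {x : V} :
    side G e x = true ↔ (G.deleteEdges {e}).Reachable e.out.1 x := by
  unfold side
  exact ⟨fun h => @of_decide_eq_true _ (Classical.propDecidable _) h,
    fun h => @decide_eq_true _ (Classical.propDecidable _) h⟩

lemma not_reachable_of_side_ne {e : Sym2 V} {x y : V}
    (h : side G e x ≠ side G e y) : ¬ (G.deleteEdges {e}).Reachable x y :=
  fun hr => h (side_eq_of_reachable hr)

lemma out_spec {e : Sym2 V} (he : e ∈ G.edgeSet) :
    G.Adj e.out.1 e.out.2 ∧ s(e.out.1, e.out.2) = e := by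
  have h2 : s(e.out.1, e.out.2) = e := by
    conv_rhs => rw [← e.out_eq]
  refine ⟨?_, h2⟩
  rw [← SimpleGraph.mem_edgeSet, h2]
  exact he

/-- Every vertex is reachable, after deleting the edge `s(a,b)`, from `a` or from `b`. -/
lemma reach_out (hconn : G.Connected) {a b : V} (hab : G.Adj a b) (x : V) :
    (G.deleteEdges {s(a, b)}).Reachable a x ∨ (G.deleteEdges {s(a, b)}).Reachable b x := by
  classical
  obtain ⟨p, hp⟩ : ∃ p : G.Walk a x, p.IsPath := by
    obtain ⟨q⟩ := hconn.preconnected a x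
    exact ⟨q.toPath.1, q.toPath.2⟩
  by_cases he : s(a, b) ∈ p.edges
  · right
    have hb : b ∈ p.support := p.snd_mem_support_of_mem_edges he
    refine ⟨(p.dropUntil b hb).toDeleteEdges {s(a, b)} ?_⟩
    intro e' he'
    simp only [Set.mem_singleton_iff]
    rintro rfl
    have ha : a ∈ (p.dropUntil b hb).support :=
      (p.dropUntil b hb).fst_mem_support_of_mem_edges he'
    have hane : a ≠ b := hab.ne
    have ha' : a ∈ (p.dropUntil b hb).support.tail := by
      rw [(p.dropUntil b hb).support_eq_cons] at ha
      rcases List.mem_cons.mp ha with hh | hh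
      · exact absurd hh hane
      · exact hh
    -- a appears both in takeUntil's support and in dropUntil's tail, contradicting nodup
    have hsup : p.support = (p.takeUntil b hb).support ++ (p.dropUntil b hb).support.tail := by
      rw [← SimpleGraph.Walk.support_append, SimpleGraph.Walk.take_spec]
    have hnd := hp.support_nodup
    rw [hsup] at hnd
    have hdisj := List.disjoint_of_nodup_append hnd
    exact hdisj ((p.takeUntil b hb).start_mem_support) ha'
  · left
    refine ⟨p.toDeleteEdges {s(a, b)} ?_⟩
    intro e' he'
    simp only [Set.mem_singleton_iff]
    rintro rfl
    exact he he'

lemma reachable_of_side_eq (hconn : G.Connected) {e : Sym2 V} (he : e ∈ G.edgeSet) {x y : V}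
    (h : side G e x = side G e y) : (G.deleteEdges {e}).Reachable x y := by
  obtain ⟨hadj, hout⟩ := out_spec he
  by_cases hx : (G.deleteEdges {e}).Reachable e.out.1 x
  · have hy : (G.deleteEdges {e}).Reachable e.out.1 y := by
      rw [← side_true, ← h, side_true]
      exact hx
    exact hx.symm.trans hy
  · have hy : ¬ (G.deleteEdges {e}).Reachable e.out.1 y := by
      rw [← side_true, ← h, side_true]
      exact hx
    have hx2 : (G.deleteEdges {e}).Reachable e.out.2 x := by
      rcases reach_out hconn hadj x with h' | h'
      · exact absurd (by rwa [hout] at h') hx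
      · rwa [hout] at h'
    have hy2 : (G.deleteEdges {e}).Reachable e.out.2 y := by
      rcases reach_out hconn hadj y with h' | h'
      · exact absurd (by rwa [hout] at h') hy
      · rwa [hout] at h'
    exact hx2.symm.trans hy2

/-- Characterization: an edge lies on the (unique) path between `u` and `v` iff it is a graph
edge whose deletion disconnects `u` from `v`. -/
lemma mem_edges_iff (hG : G.IsTree) {u v : V} {p : G.Walk u v} (hp : p.IsPath) (e : Sym2 V) :
    e ∈ p.edges ↔ e ∈ G.edgeSet ∧ ¬ (G.deleteEdges {e}).Reachable u v := by
  constructor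
  · intro hep
    refine ⟨p.edges_subset_edgeSet hep, ?_⟩
    intro hr
    refine hr.elim_path fun q => ?_
    have hq : ∀ e' ∈ (q : (G.deleteEdges {e}).Walk u v).edges, e' ∈ G.edgeSet := by
      intro e' he'
      have := (q : (G.deleteEdges {e}).Walk u v).edges_subset_edgeSet he'
      rw [SimpleGraph.edgeSet_deleteEdges] at this
      exact this.1
    have hqe : e ∉ (q : (G.deleteEdges {e}).Walk u v).edges := by
      intro hin
      have := (q : (G.deleteEdges {e}).Walk u v).edges_subset_edgeSet hin
      rw [SimpleGraph.edgeSet_deleteEdges] at this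
      exact this.2 rfl
    have hqt : ((q : (G.deleteEdges {e}).Walk u v).transfer G hq).IsPath :=
      q.2.transfer hq
    obtain ⟨P, _, huniq⟩ := hG.existsUnique_path u v
    have h1 : p = P := huniq p hp
    have h2 : (q : (G.deleteEdges {e}).Walk u v).transfer G hq = P := huniq _ hqt
    rw [h1, ← h2, SimpleGraph.Walk.edges_transfer] at hep
    exact hqe hep
  · rintro ⟨he, hnr⟩
    by_contra hep
    refine hnr ⟨p.toDeleteEdges {e} ?_⟩
    intro e' he'
    simp only [Set.mem_singleton_iff]
    rintro rfl
    exact hep he'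

lemma mem_edges_iff_side (hG : G.IsTree) {u v : V} {p : G.Walk u v} (hp : p.IsPath)
    {e : Sym2 V} (he : e ∈ G.edgeSet) :
    e ∈ p.edges ↔ side G e u ≠ side G e v := by
  rw [mem_edges_iff hG hp e]
  constructor
  · rintro ⟨-, hnr⟩ hside
    exact hnr (reachable_of_side_eq hG.isConnected he hside)
  · intro hside
    exact ⟨he, not_reachable_of_side_ne hside⟩

/-- The fundamental formula: `D u v` is the sum of the weights of the edges separating
`u` from `v`. -/
lemma D_formula [Fintype V] [Fintype G.edgeSet] (hG : G.IsTree) (w : Sym2 V → ℝ) (D : V → V → ℝ)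
    (hD : ∀ u v : V, ∃ p : G.Walk u v, p.IsPath ∧ D u v = (p.edges.map w).sum)
    (u v : V) :
    D u v = ∑ e ∈ G.edgeFinset, (if side G e u ≠ side G e v then w e else 0) := by
  classical
  obtain ⟨p, hp, hval⟩ := hD u v
  have hnd : p.edges.Nodup := hp.isTrail.edges_nodup
  have hfin : G.edgeFinset.filter (fun e => side G e u ≠ side G e v) = p.edges.toFinset := by
    ext e
    simp only [Finset.mem_filter, List.mem_toFinset, SimpleGraph.mem_edgeFinset]
    constructor
    · rintro ⟨he, hs⟩
      exact (mem_edges_iff_side hG hp he).mpr hs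
    · intro hep
      have he := p.edges_subset_edgeSet hep
      exact ⟨he, (mem_edges_iff_side hG hp he).mp hep⟩
  calc D u v = (p.edges.map w).sum := hval
    _ = p.edges.toFinset.sum w := (List.sum_toFinset w hnd).symm
    _ = ∑ e ∈ G.edgeFinset.filter (fun e => side G e u ≠ side G e v), w e := by rw [hfin]
    _ = ∑ e ∈ G.edgeFinset, (if side G e u ≠ side G e v then w e else 0) :=
      Finset.sum_filter _ _

/-- Nestedness-type lemma: if `x` is on the opposite side of `e` from an endpoint `c` of the
edge `f ≠ e`, and `y` is on the same side of `e` as `x`, then `x` and `y` are on the same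
side of `f`. -/
lemma nest {e f : Sym2 V} (hef : e ≠ f) {c : V} (hc : c ∈ f)
    {x y : V} (hcx : ¬ (G.deleteEdges {e}).Reachable c x)
    (hxy : (G.deleteEdges {e}).Reachable x y) :
    (G.deleteEdges {f}).Reachable x y := by
  classical
  refine hxy.elim_path fun p => ?_
  have hfe : f ∉ (p : (G.deleteEdges {e}).Walk x y).edges := by
    intro hfp
    have hspec := Sym2.other_spec hc
    have hcs : c ∈ (p : (G.deleteEdges {e}).Walk x y).support :=
      SimpleGraph.Walk.fst_mem_support_of_mem_edges _ (hspec.symm ▸ hfp)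
    exact hcx ⟨((p : (G.deleteEdges {e}).Walk x y).takeUntil c hcs).reverse⟩
  refine ⟨(p : (G.deleteEdges {e}).Walk x y).transfer (G.deleteEdges {f}) ?_⟩
  intro e' he'
  have h1 := (p : (G.deleteEdges {e}).Walk x y).edges_subset_edgeSet he'
  rw [SimpleGraph.edgeSet_deleteEdges] at h1
  rw [SimpleGraph.edgeSet_deleteEdges]
  refine ⟨h1.1, ?_⟩
  simp only [Set.mem_singleton_iff]
  rintro rfl
  exact hfe he'

/-- Two distinct 2-2 split types cannot both be realized by edges of the tree. -/
lemma exc (hG : G.IsTree) {e f : Sym2 V} (he : e ∈ G.edgeSet) (hf : f ∈ G.edgeSet)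
    {p q r s : V}
    (h1 : side G e p = side G e q) (h2 : side G e r = side G e s)
    (h3 : side G e p ≠ side G e r)
    (h4 : side G f p = side G f r) (h5 : side G f q = side G f s)
    (h6 : side G f p ≠ side G f q) : False := by
  have hef : e ≠ f := by
    rintro rfl
    exact h6 h1
  have hc : f.out.1 ∈ f := Sym2.out_fst_mem f
  have hdich : side G e f.out.1 = side G e p ∨ side G e f.out.1 = side G e r := by
    cases hcb : side G e f.out.1 <;> cases hpb : side G e p <;> cases hrb : side G e r <;>
      simp_all
  rcases hdich with hcase | hcase
  · -- f's endpoint is on the {p,q} side of e; so r,s are on one side of f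
    have hcr : ¬ (G.deleteEdges {e}).Reachable f.out.1 r :=
      not_reachable_of_side_ne (hcase ▸ h3)
    have hrs : (G.deleteEdges {e}).Reachable r s :=
      reachable_of_side_eq hG.isConnected he h2
    have : side G f r = side G f s := side_eq_of_reachable (nest hef hc hcr hrs)
    rw [h4] at h6
    rw [this, ← h5] at h6
    exact h6 rfl
  · -- f's endpoint is on the {r,s} side of e; so p,q are on one side of f
    have hcp : ¬ (G.deleteEdges {e}).Reachable f.out.1 p := by
      refine not_reachable_of_side_ne ?_
      rw [hcase]
      exact fun hh => h3 hh.symm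
    have hpq : (G.deleteEdges {e}).Reachable p q :=
      reachable_of_side_eq hG.isConnected he h1
    exact h6 (side_eq_of_reachable (nest hef hc hcp hpq))

/-- Per-edge computation, case: edge types `{v₁,v₂}|{w₁,w₂}` and `{v₁,w₂}|{w₁,v₂}` excluded. -/
lemma edge_calc_a {we : ℝ} (hwe : 0 ≤ we) (b1 b2 b3 b4 : Bool)
    (hT2 : ¬(b1 = b3 ∧ b2 = b4 ∧ b1 ≠ b2))
    (hT3 : ¬(b1 = b4 ∧ b2 = b3 ∧ b1 ≠ b2)) :
    ((if b1 ≠ b3 then we else 0) + (if b2 ≠ b4 then we else 0)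
      = (if b1 ≠ b4 then we else 0) + (if b2 ≠ b3 then we else 0))
    ∧ ((if b1 ≠ b2 then we else 0) + (if b3 ≠ b4 then we else 0)
      ≤ (if b1 ≠ b3 then we else 0) + (if b2 ≠ b4 then we else 0)) := by
  cases b1 <;> cases b2 <;> cases b3 <;> cases b4 <;> simp_all

/-- Per-edge computation, case: edge types `{v₁,w₁}|{v₂,w₂}` and `{v₁,w₂}|{w₁,v₂}` excluded. -/
lemma edge_calc_b {we : ℝ} (hwe : 0 ≤ we) (b1 b2 b3 b4 : Bool)
    (hT1 : ¬(b1 = b2 ∧ b3 = b4 ∧ b1 ≠ b3))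
    (hT3 : ¬(b1 = b4 ∧ b2 = b3 ∧ b1 ≠ b2)) :
    ((if b1 ≠ b2 then we else 0) + (if b3 ≠ b4 then we else 0)
      = (if b1 ≠ b4 then we else 0) + (if b2 ≠ b3 then we else 0))
    ∧ ((if b1 ≠ b3 then we else 0) + (if b2 ≠ b4 then we else 0)
      ≤ (if b1 ≠ b2 then we else 0) + (if b3 ≠ b4 then we else 0)) := by
  cases b1 <;> cases b2 <;> cases b3 <;> cases b4 <;> simp_all

/-- Per-edge computation, case: edge types `{v₁,w₁}|{v₂,w₂}` and `{v₁,v₂}|{w₁,w₂}` excluded. -/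
lemma edge_calc_c {we : ℝ} (hwe : 0 ≤ we) (b1 b2 b3 b4 : Bool)
    (hT1 : ¬(b1 = b2 ∧ b3 = b4 ∧ b1 ≠ b3))
    (hT2 : ¬(b1 = b3 ∧ b2 = b4 ∧ b1 ≠ b2)) :
    ((if b1 ≠ b2 then we else 0) + (if b3 ≠ b4 then we else 0)
      = (if b1 ≠ b3 then we else 0) + (if b2 ≠ b4 then we else 0))
    ∧ ((if b1 ≠ b4 then we else 0) + (if b2 ≠ b3 then we else 0)
      ≤ (if b1 ≠ b2 then we else 0) + (if b3 ≠ b4 then we else 0)) := by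
  cases b1 <;> cases b2 <;> cases b3 <;> cases b4 <;> simp_all

end FourPointAux

open FourPointAux in
/-- **The tree path-metric satisfies the four-point condition.**
Let `G` be a finite tree with nonnegative edge weights `w`, and let `D u v` be
the sum of `w` over the edges of the unique path from `u` to `v` (this pins `D`
down: in a tree any path between `u` and `v` is the unique one). Then for any
four vertices `v₁, w₁, v₂, w₂`, among the three pairwise sums
`D v₁ w₁ + D v₂ w₂`, `D v₁ v₂ + D w₁ w₂`, `D v₁ w₂ + D w₁ v₂`,
the maximum is attained by at least two of them. -/
theorem tree_metric_four_point_condition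
    {V : Type*} [Fintype V] (G : SimpleGraph V) (hG : G.IsTree)
    (w : Sym2 V → ℝ) (hw : ∀ e ∈ G.edgeSet, 0 ≤ w e)
    (D : V → V → ℝ)
    (hD : ∀ u v : V, ∃ p : G.Walk u v, p.IsPath ∧ D u v = (p.edges.map w).sum)
    (v₁ w₁ v₂ w₂ : V) :
    (D v₁ w₁ + D v₂ w₂ = D v₁ v₂ + D w₁ w₂ ∧ D v₁ w₂ + D w₁ v₂ ≤ D v₁ w₁ + D v₂ w₂) ∨
    (D v₁ w₁ + D v₂ w₂ = D v₁ w₂ + D w₁ v₂ ∧ D v₁ v₂ + D w₁ w₂ ≤ D v₁ w₁ + D v₂ w₂) ∨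
    (D v₁ v₂ + D w₁ w₂ = D v₁ w₂ + D w₁ v₂ ∧ D v₁ w₁ + D v₂ w₂ ≤ D v₁ v₂ + D w₁ w₂) := by
  classical
  haveI : Fintype G.edgeSet := Fintype.ofFinite _
  have hDf := D_formula hG w D hD
  set sd := side G with hsd
  -- the three possible 2-2 split types of an edge w.r.t. the quadruple
  set T1 : Sym2 V → Prop := fun e => sd e v₁ = sd e w₁ ∧ sd e v₂ = sd e w₂ ∧ sd e v₁ ≠ sd e v₂
    with hT1def
  set T2 : Sym2 V → Prop := fun e => sd e v₁ = sd e v₂ ∧ sd e w₁ = sd e w₂ ∧ sd e v₁ ≠ sd e w₁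
    with hT2def
  set T3 : Sym2 V → Prop := fun e => sd e v₁ = sd e w₂ ∧ sd e w₁ = sd e v₂ ∧ sd e v₁ ≠ sd e w₁
    with hT3def
  have hwF : ∀ e ∈ G.edgeFinset, 0 ≤ w e := fun e he =>
    hw e (SimpleGraph.mem_edgeFinset.mp he)
  by_cases h1 : ∃ e ∈ G.edgeSet, T1 e
  · -- some edge splits {v₁,w₁} | {v₂,w₂}: third disjunct
    obtain ⟨e, he, het⟩ := h1
    have hno2 : ∀ f ∈ G.edgeFinset, ¬ T2 f := by
      intro f hf hft
      exact exc hG he (SimpleGraph.mem_edgeFinset.mp hf)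
        het.1 het.2.1 het.2.2 hft.1 hft.2.1 hft.2.2
    have hno3 : ∀ f ∈ G.edgeFinset, ¬ T3 f := by
      intro f hf hft
      have h3' : sd e v₁ ≠ sd e w₂ := by
        rw [← het.2.1] at *
        intro hh
        exact het.2.2 hh
      exact exc hG he (SimpleGraph.mem_edgeFinset.mp hf)
        het.1 het.2.1.symm h3' hft.1 hft.2.1 hft.2.2
    have key : ∀ f ∈ G.edgeFinset,
        ((if sd f v₁ ≠ sd f v₂ then w f else 0) + (if sd f w₁ ≠ sd f w₂ then w f else 0)
          = (if sd f v₁ ≠ sd f w₂ then w f else 0) + (if sd f w₁ ≠ sd f v₂ then w f else 0))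
        ∧ ((if sd f v₁ ≠ sd f w₁ then w f else 0) + (if sd f v₂ ≠ sd f w₂ then w f else 0)
          ≤ (if sd f v₁ ≠ sd f v₂ then w f else 0) + (if sd f w₁ ≠ sd f w₂ then w f else 0)) := by
      intro f hf
      exact edge_calc_a (hwF f hf) (sd f v₁) (sd f w₁) (sd f v₂) (sd f w₂)
        (hno2 f hf) (hno3 f hf)
    refine Or.inr (Or.inr ⟨?_, ?_⟩)
    · rw [hDf v₁ v₂, hDf w₁ w₂, hDf v₁ w₂, hDf w₁ v₂, ← Finset.sum_add_distrib,
        ← Finset.sum_add_distrib]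
      exact Finset.sum_congr rfl fun f hf => (key f hf).1
    · rw [hDf v₁ w₁, hDf v₂ w₂, hDf v₁ v₂, hDf w₁ w₂, ← Finset.sum_add_distrib,
        ← Finset.sum_add_distrib]
      exact Finset.sum_le_sum fun f hf => (key f hf).2
  · by_cases h2 : ∃ e ∈ G.edgeSet, T2 e
    · -- some edge splits {v₁,v₂} | {w₁,w₂}: second disjunct
      obtain ⟨e, he, het⟩ := h2
      have hno1 : ∀ f ∈ G.edgeFinset, ¬ T1 f := fun f hf hft =>
        h1 ⟨f, SimpleGraph.mem_edgeFinset.mp hf, hft⟩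
      have hno3 : ∀ f ∈ G.edgeFinset, ¬ T3 f := by
        intro f hf hft
        -- e splits {v₁,v₂}|{w₂,w₁}, f splits {v₁,w₂}|{v₂,w₁}; use p=v₁ q=v₂ r=w₂ s=w₁
        have he3 : sd e v₁ ≠ sd e w₂ := by
          rw [← het.2.1] at *
          exact het.2.2
        have hf3 : sd f v₁ ≠ sd f v₂ := by
          rw [← hft.2.1] at *
          exact hft.2.2
        exact exc hG he (SimpleGraph.mem_edgeFinset.mp hf)
          het.1 het.2.1.symm he3 hft.1 hft.2.1.symm hf3
      have key : ∀ f ∈ G.edgeFinset,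
          ((if sd f v₁ ≠ sd f w₁ then w f else 0) + (if sd f v₂ ≠ sd f w₂ then w f else 0)
            = (if sd f v₁ ≠ sd f w₂ then w f else 0) + (if sd f w₁ ≠ sd f v₂ then w f else 0))
          ∧ ((if sd f v₁ ≠ sd f v₂ then w f else 0) + (if sd f w₁ ≠ sd f w₂ then w f else 0)
            ≤ (if sd f v₁ ≠ sd f w₁ then w f else 0) + (if sd f v₂ ≠ sd f w₂ then w f else 0)) := by
        intro f hf
        exact edge_calc_b (hwF f hf) (sd f v₁) (sd f w₁) (sd f v₂) (sd f w₂)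
          (hno1 f hf) (hno3 f hf)
      refine Or.inr (Or.inl ⟨?_, ?_⟩)
      · rw [hDf v₁ w₁, hDf v₂ w₂, hDf v₁ w₂, hDf w₁ v₂, ← Finset.sum_add_distrib,
          ← Finset.sum_add_distrib]
        exact Finset.sum_congr rfl fun f hf => (key f hf).1
      · rw [hDf v₁ w₁, hDf v₂ w₂, hDf v₁ v₂, hDf w₁ w₂, ← Finset.sum_add_distrib,
          ← Finset.sum_add_distrib]
        exact Finset.sum_le_sum fun f hf => (key f hf).2
    · -- no edge of type T1 or T2: first disjunct
      have hno1 : ∀ f ∈ G.edgeFinset, ¬ T1 f := fun f hf hft =>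
        h1 ⟨f, SimpleGraph.mem_edgeFinset.mp hf, hft⟩
      have hno2 : ∀ f ∈ G.edgeFinset, ¬ T2 f := fun f hf hft =>
        h2 ⟨f, SimpleGraph.mem_edgeFinset.mp hf, hft⟩
      have key : ∀ f ∈ G.edgeFinset,
          ((if sd f v₁ ≠ sd f w₁ then w f else 0) + (if sd f v₂ ≠ sd f w₂ then w f else 0)
            = (if sd f v₁ ≠ sd f v₂ then w f else 0) + (if sd f w₁ ≠ sd f w₂ then w f else 0))
          ∧ ((if sd f v₁ ≠ sd f w₂ then w f else 0) + (if sd f w₁ ≠ sd f v₂ then w f else 0)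
            ≤ (if sd f v₁ ≠ sd f w₁ then w f else 0) + (if sd f v₂ ≠ sd f w₂ then w f else 0)) := by
        intro f hf
        exact edge_calc_c (hwF f hf) (sd f v₁) (sd f w₁) (sd f v₂) (sd f w₂)
          (hno1 f hf) (hno2 f hf)
      refine Or.inl ⟨?_, ?_⟩
      · rw [hDf v₁ w₁, hDf v₂ w₂, hDf v₁ v₂, hDf w₁ w₂, ← Finset.sum_add_distrib,
          ← Finset.sum_add_distrib]
        exact Finset.sum_congr rfl fun f hf => (key f hf).1
      · rw [hDf v₁ w₁, hDf v₂ w₂, hDf v₁ w₂, hDf w₁ v₂, ← Finset.sum_add_distrib,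
          ← Finset.sum_add_distrib]
        exact Finset.sum_le_sum fun f hf => (key f hf).2
end

section
/- Let f > 0, let a, b, c₁, c₂ ≥ 0 and m > 0 be reals, and define the quartet tree metric d on four points x₀, w, v₁, v₂ by d(x₀,w)=a+b, d(v₁,v₂)=c₁+c₂, d(x₀,v₁)=a+m+c₁, d(x₀,v₂)=a+m+c₂, d(w,v₁)=b+m+c₁, d(w,v₂)=b+m+c₂. Let D be a symmetric function on pairs from {x₀,w,v₁,v₂} with |D(x,y) − d(x,y)| < f/8 for all pairs x ≠ y, let L > 0 be a real (the true length of a tree edge (u,v)), and let h be a real with |h − L| < f/4. Assume that either (i) m = L (the 'no collision' configuration) or (ii) m ≤ L − f (the 'collision' configuration). Then, setting ν := (1/2)·(D(v₁,x₀) + D(v₂,w) − D(v₁,v₂) − D(x₀,w)), one has h − ν > f/2 if and only if case (ii) holds. -/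
/-- **Correctness of the collision-detection test (routine IsCollision).**
The four points are indexed by `Fin 4`: `x₀ = 0`, `w = 1`, `v₁ = 2`, `v₂ = 3`.
The quartet tree metric `d` has `d(x₀,w)=a+b`, `d(v₁,v₂)=c₁+c₂`,
`d(x₀,v₁)=a+m+c₁`, `d(x₀,v₂)=a+m+c₂`, `d(w,v₁)=b+m+c₁`, `d(w,v₂)=b+m+c₂`,
where `m > 0` is the internal path length of the split `x₀w|v₁v₂`. `D` is a
symmetric approximation of `d` within `f/8`, `L > 0` is the true length of the
tree edge `(u,v)`, and `h` approximates `L` within `f/4`. Assuming either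
`m = L` (no collision) or `m ≤ L − f` (collision), the test quantity
`ν := (1/2)(D(v₁,x₀)+D(v₂,w)−D(v₁,v₂)−D(x₀,w))` satisfies `h − ν > f/2`
precisely in the collision case. -/
theorem quartet_isCollision_correct
    (f a b c₁ c₂ m L h : ℝ) (hf : 0 < f)
    (ha : 0 ≤ a) (hb : 0 ≤ b) (hc₁ : 0 ≤ c₁) (hc₂ : 0 ≤ c₂) (hm : 0 < m) (hL : 0 < L)
    (D : Fin 4 → Fin 4 → ℝ)
    (hsym : ∀ x y : Fin 4, D x y = D y x)
    -- `D` approximates the quartet metric `d` within `f/8` on all pairs: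
    (h01 : |D 0 1 - (a + b)| < f / 8)
    (h23 : |D 2 3 - (c₁ + c₂)| < f / 8)
    (h02 : |D 0 2 - (a + m + c₁)| < f / 8)
    (h03 : |D 0 3 - (a + m + c₂)| < f / 8)
    (h12 : |D 1 2 - (b + m + c₁)| < f / 8)
    (h13 : |D 1 3 - (b + m + c₂)| < f / 8)
    -- `h` approximates the true edge length `L` within `f/4`:
    (hh : |h - L| < f / 4)
    -- either the 'no collision' or the 'collision' configuration holds:
    (hcase : m = L ∨ m ≤ L - f) :
    (f / 2 < h - (1 / 2) * (D 2 0 + D 3 1 - D 2 3 - D 0 1) ↔ m ≤ L - f) := by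
  have e20 : D 2 0 = D 0 2 := hsym 2 0
  have e31 : D 3 1 = D 1 3 := hsym 3 1
  rw [e20, e31]
  rw [abs_lt] at h01 h23 h02 h03 h12 h13 hh
  constructor
  · intro hgt
    rcases hcase with hml | hml
    · exfalso; subst hml; nlinarith [h01.1, h01.2, h23.1, h23.2, h02.1, h02.2,
        h03.1, h03.2, h12.1, h12.2, h13.1, h13.2, hh.1, hh.2]
    · exact hml
  · intro hml
    nlinarith [h01.1, h01.2, h23.1, h23.2, h02.1, h02.2,
      h03.1, h03.2, h12.1, h12.2, h13.1, h13.2, hh.1, hh.2]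
end

section
/- Let G be a finite tree in which every vertex has degree 1 or 3, and suppose G has at least 4 vertices of degree 1 (leaves). Then G contains a bundle: there exist four distinct leaves x₁, x₂, x₃, x₄ such that the graph distance between any two of them is at most 5, and some pair among them is at graph distance exactly 2 (i.e., forms a cherry). -/
open SimpleGraph Walk

section BundleProof

variable {V : Type*} {G : SimpleGraph V}

/-- A leaf's neighbour is unique. -/
private lemma uniq_nbr {u p x : V} (hu : (G.neighborSet u).ncard = 1) (hup : G.Adj u p)
    (hx : G.Adj u x) : x = p := by
  obtain ⟨a, ha⟩ := Set.ncard_eq_one.mp hu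
  have h1 : p ∈ G.neighborSet u := hup
  have h2 : x ∈ G.neighborSet u := hx
  rw [ha, Set.mem_singleton_iff] at h1 h2
  rw [h2, h1]

private lemma leaf_ne {x y a b : V} (hu : (G.neighborSet x).ncard = 1) (hx : G.Adj x a)
    (hy : G.Adj y b) (hab : a ≠ b) : x ≠ y := by
  intro h
  subst h
  exact hab ((uniq_nbr hu hx hy).symm)

private lemma two_others {α : Type*} {s : Set α} (h : s.ncard = 3) {x : α} (hx : x ∈ s) :
    ∃ a b, a ∈ s ∧ b ∈ s ∧ a ≠ b ∧ a ≠ x ∧ b ≠ x := by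
  obtain ⟨a, b, c, hab, hac, hbc, rfl⟩ := Set.ncard_eq_three.mp h
  simp only [Set.mem_insert_iff, Set.mem_singleton_iff] at hx
  rcases hx with rfl | rfl | rfl
  · exact ⟨b, c, by simp, by simp, hbc, hab.symm, hac.symm⟩
  · exact ⟨a, c, by simp, by simp, hac, hab, hbc.symm⟩
  · exact ⟨a, b, by simp, by simp, hab, hac, hbc⟩

private lemma third_elt {α : Type*} {s : Set α} (h : s.ncard = 3) {x y : α} (hx : x ∈ s)
    (hy : y ∈ s) (hxy : x ≠ y) : ∃ z ∈ s, z ≠ x ∧ z ≠ y := by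
  obtain ⟨a, b, has, hbs, hab, hax, hbx⟩ := two_others h hx
  by_cases hay : a = y
  · exact ⟨b, hbs, hbx, fun hby => hab (by rw [hay, hby])⟩
  · exact ⟨a, has, hax, hay⟩

private lemma mem_three {α : Type*} {s : Set α} (h : s.ncard = 3) {a b c x : α} (ha : a ∈ s)
    (hb : b ∈ s) (hc : c ∈ s) (hab : a ≠ b) (hac : a ≠ c) (hbc : b ≠ c) (hx : x ∈ s) :
    x = a ∨ x = b ∨ x = c := by
  obtain ⟨p, q, r, hpq, hpr, hqr, rfl⟩ := Set.ncard_eq_three.mp h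
  simp only [Set.mem_insert_iff, Set.mem_singleton_iff] at *
  rcases ha with rfl | rfl | rfl <;> rcases hb with rfl | rfl | rfl <;>
    rcases hc with rfl | rfl | rfl <;> tauto

/-- In a tree, adjacent vertices are at different distances from any root. -/
private lemma no_same_level (hG : G.IsTree) (r : V) {v w : V} (h : G.Adj v w) :
    G.dist r v ≠ G.dist r w := by
  classical
  intro heq
  obtain ⟨P, hPp, hPl⟩ := hG.isConnected.exists_path_of_dist r v
  obtain ⟨Q, hQp, hQl⟩ := hG.isConnected.exists_path_of_dist r w
  by_cases hv : v ∈ Q.support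
  · have h1 : (Q.takeUntil v hv).length ≤ Q.length := Walk.length_takeUntil_le Q hv
    have h2 : G.dist r v ≤ (Q.takeUntil v hv).length := SimpleGraph.dist_le _
    have h3 := congrArg Walk.length (Q.take_spec hv)
    rw [Walk.length_append] at h3
    have h4 : (Q.dropUntil v hv).length = 0 := by omega
    exact h.ne (Walk.eq_of_length_eq_zero h4)
  · have hQ' : (Q.concat h.symm).IsPath := by
      rw [← Walk.isPath_reverse_iff, Walk.reverse_concat]
      exact hQp.reverse.cons (by simpa [Walk.support_reverse] using hv)
    have huniq := (hG.existsUnique_path r v).unique hPp hQ'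
    have hlen := congrArg Walk.length huniq
    rw [Walk.length_concat] at hlen
    omega

/-- Every vertex other than the root has a parent (a neighbour one level up). -/
private lemma parent_exists (hG : G.IsTree) {r v : V} (hv : v ≠ r) :
    ∃ w, G.Adj v w ∧ G.dist r w + 1 = G.dist r v := by
  have hpos : 0 < G.dist r v := hG.isConnected.pos_dist_of_ne (Ne.symm hv)
  obtain ⟨P, hPl⟩ := hG.isConnected.exists_walk_length_eq_dist r v
  have hnn : ¬ P.reverse.Nil := by
    rw [Walk.nil_iff_length_eq, Walk.length_reverse]
    omega
  obtain ⟨x, hadj, Q, hQ⟩ := Walk.not_nil_iff.mp hnn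
  have hlen : Q.length + 1 = G.dist r v := by
    have := congrArg Walk.length hQ
    rw [Walk.length_reverse, Walk.length_cons] at this
    omega
  have h1 : G.dist r x ≤ Q.length := by
    have := SimpleGraph.dist_le Q.reverse
    rwa [Walk.length_reverse] at this
  have h2 : G.dist r v ≤ G.dist r x + G.dist x v :=
    hG.isConnected.dist_triangle
  have h3 : G.dist x v = 1 := SimpleGraph.dist_eq_one_iff_adj.mpr hadj.symm
  exact ⟨x, hadj, by omega⟩

/-- The parent is unique. -/
private lemma parent_unique (hG : G.IsTree) {r v w1 w2 : V} (h1 : G.Adj v w1) (h2 : G.Adj v w2)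
    (hd1 : G.dist r w1 + 1 = G.dist r v) (hd2 : G.dist r w2 + 1 = G.dist r v) : w1 = w2 := by
  obtain ⟨Q1, hQ1p, hQ1l⟩ := hG.isConnected.exists_path_of_dist r w1
  obtain ⟨Q2, hQ2p, hQ2l⟩ := hG.isConnected.exists_path_of_dist r w2
  have hP1 : (Q1.concat h1.symm).IsPath :=
    Walk.isPath_of_length_eq_dist _ (by rw [Walk.length_concat]; omega)
  have hP2 : (Q2.concat h2.symm).IsPath :=
    Walk.isPath_of_length_eq_dist _ (by rw [Walk.length_concat]; omega)
  have heq := (hG.existsUnique_path r v).unique hP1 hP2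
  obtain ⟨hv, -⟩ := Walk.concat_inj heq
  exact hv

/-- A neighbour is either the parent, or one level further from the root. -/
private lemma adj_level (hG : G.IsTree) (r : V) {v w : V} (h : G.Adj v w) :
    G.dist r w + 1 = G.dist r v ∨ G.dist r v + 1 = G.dist r w := by
  have hne := no_same_level hG r h
  have t1 : G.dist r v ≤ G.dist r w + G.dist w v := hG.isConnected.dist_triangle
  have t2 : G.dist r w ≤ G.dist r v + G.dist v w := hG.isConnected.dist_triangle
  have e1 : G.dist w v = 1 := SimpleGraph.dist_eq_one_iff_adj.mpr h.symm
  have e2 : G.dist v w = 1 := SimpleGraph.dist_eq_one_iff_adj.mpr h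
  omega

private lemma chain2 (hG : G.IsTree) {a b c : V} (h1 : G.Adj a b) (h2 : G.Adj b c) :
    G.dist a c ≤ 2 := by
  have t : G.dist a c ≤ G.dist a b + G.dist b c := hG.isConnected.dist_triangle
  have e1 : G.dist a b = 1 := SimpleGraph.dist_eq_one_iff_adj.mpr h1
  have e2 : G.dist b c = 1 := SimpleGraph.dist_eq_one_iff_adj.mpr h2
  omega

private lemma chain3 (hG : G.IsTree) {a b c d : V} (h1 : G.Adj a b) (h2 : G.Adj b c)
    (h3 : G.Adj c d) : G.dist a d ≤ 3 := by
  have t : G.dist a d ≤ G.dist a b + G.dist b d := hG.isConnected.dist_triangle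
  have e1 : G.dist a b = 1 := SimpleGraph.dist_eq_one_iff_adj.mpr h1
  have := chain2 hG h2 h3
  omega

private lemma chain4 (hG : G.IsTree) {a b c d e : V} (h1 : G.Adj a b) (h2 : G.Adj b c)
    (h3 : G.Adj c d) (h4 : G.Adj d e) : G.dist a e ≤ 4 := by
  have t : G.dist a e ≤ G.dist a b + G.dist b e := hG.isConnected.dist_triangle
  have e1 : G.dist a b = 1 := SimpleGraph.dist_eq_one_iff_adj.mpr h1
  have := chain3 hG h2 h3 h4
  omega

private lemma chain5 (hG : G.IsTree) {a b c d e f : V} (h1 : G.Adj a b) (h2 : G.Adj b c)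
    (h3 : G.Adj c d) (h4 : G.Adj d e) (h5 : G.Adj e f) : G.dist a f ≤ 5 := by
  have t : G.dist a f ≤ G.dist a b + G.dist b f := hG.isConnected.dist_triangle
  have e1 : G.dist a b = 1 := SimpleGraph.dist_eq_one_iff_adj.mpr h1
  have := chain4 hG h2 h3 h4 h5
  omega

/-- Two distinct leaves with a common neighbour are at distance exactly 2. -/
private lemma cherry_dist (hG : G.IsTree) {u p s : V} (hu : (G.neighborSet u).ncard = 1)
    (hup : G.Adj u p) (hps : G.Adj p s) (hus : u ≠ s) (hsp : s ≠ p) : G.dist u s = 2 := by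
  have hle := chain2 hG hup hps
  have h0 : G.dist u s ≠ 0 := by
    rw [ne_eq, hG.isConnected.dist_eq_zero_iff]
    exact hus
  have h1 : G.dist u s ≠ 1 := by
    intro h
    exact hsp (uniq_nbr hu hup (SimpleGraph.dist_eq_one_iff_adj.mp h))
  omega

private lemma top_leaf (hG : G.IsTree)
    (hdeg : ∀ v : V, (G.neighborSet v).ncard = 1 ∨ (G.neighborSet v).ncard = 3)
    {r : V} {M : ℕ} (hM : 1 ≤ M) (hmax : ∀ v, G.dist r v ≤ M)
    {x : V} (hx : G.dist r x = M) : (G.neighborSet x).ncard = 1 := by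
  rcases hdeg x with h | h
  · exact h
  · exfalso
    have hxr : x ≠ r := by
      intro he
      rw [he, SimpleGraph.dist_self] at hx
      omega
    obtain ⟨w, hw, hwd⟩ := parent_exists hG hxr
    obtain ⟨z, -, hzs, -, -, hzw, -⟩ := two_others h (show w ∈ G.neighborSet x from hw)
    have hz : G.Adj x z := hzs
    rcases adj_level hG r hz with hl | hl
    · exact hzw (parent_unique hG hz hw hl hwd)
    · have := hmax z
      omega

private lemma resolve (hG : G.IsTree)
    (hdeg : ∀ v : V, (G.neighborSet v).ncard = 1 ∨ (G.neighborSet v).ncard = 3)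
    {r : V} {M : ℕ} (hmax : ∀ v, G.dist r v ≤ M) {x px : V}
    (hadj : G.Adj x px) (hpar : G.dist r px + 1 = G.dist r x) (hx : G.dist r x + 1 = M)
    (hint : (G.neighborSet x).ncard = 3) :
    ∃ a b, a ≠ b ∧ G.Adj x a ∧ G.Adj x b ∧ G.dist r a = M ∧ G.dist r b = M ∧
      (G.neighborSet a).ncard = 1 ∧ (G.neighborSet b).ncard = 1 := by
  obtain ⟨a, b, has, hbs, hab, hax, hbx⟩ := two_others hint (show px ∈ G.neighborSet x from hadj)
  have haa : G.Adj x a := has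
  have hba : G.Adj x b := hbs
  have hM : 1 ≤ M := by omega
  have la : G.dist r a = M := by
    rcases adj_level hG r haa with hl | hl
    · exact absurd (parent_unique hG haa hadj hl hpar) hax
    · omega
  have lb : G.dist r b = M := by
    rcases adj_level hG r hba with hl | hl
    · exact absurd (parent_unique hG hba hadj hl hpar) hbx
    · omega
  exact ⟨a, b, hab, haa, hba, la, lb, top_leaf hG hdeg hM hmax la, top_leaf hG hdeg hM hmax lb⟩

private lemma package (hG : G.IsTree) {x1 x2 x3 x4 : V}
    (h12 : x1 ≠ x2) (h13 : x1 ≠ x3) (h14 : x1 ≠ x4) (h23 : x2 ≠ x3) (h24 : x2 ≠ x4)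
    (h34 : x3 ≠ x4)
    (l1 : (G.neighborSet x1).ncard = 1) (l2 : (G.neighborSet x2).ncard = 1)
    (l3 : (G.neighborSet x3).ncard = 1) (l4 : (G.neighborSet x4).ncard = 1)
    (d12 : G.dist x1 x2 = 2)
    (d13 : G.dist x1 x3 ≤ 5) (d14 : G.dist x1 x4 ≤ 5) (d23 : G.dist x2 x3 ≤ 5)
    (d24 : G.dist x2 x4 ≤ 5) (d34 : G.dist x3 x4 ≤ 5) :
    ∃ y₁ y₂ y₃ y₄ : V,
      y₁ ≠ y₂ ∧ y₁ ≠ y₃ ∧ y₁ ≠ y₄ ∧ y₂ ≠ y₃ ∧ y₂ ≠ y₄ ∧ y₃ ≠ y₄ ∧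
      (G.neighborSet y₁).ncard = 1 ∧ (G.neighborSet y₂).ncard = 1 ∧
      (G.neighborSet y₃).ncard = 1 ∧ (G.neighborSet y₄).ncard = 1 ∧
      (∀ x ∈ ({y₁, y₂, y₃, y₄} : Set V), ∀ y ∈ ({y₁, y₂, y₃, y₄} : Set V),
        G.dist x y ≤ 5) ∧
      (∃ x ∈ ({y₁, y₂, y₃, y₄} : Set V), ∃ y ∈ ({y₁, y₂, y₃, y₄} : Set V),
        x ≠ y ∧ G.dist x y = 2) := by
  refine ⟨x1, x2, x3, x4, h12, h13, h14, h23, h24, h34, l1, l2, l3, l4, ?_,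
    ⟨x1, by simp, x2, by simp, h12, d12⟩⟩
  intro x hx y hy
  simp only [Set.mem_insert_iff, Set.mem_singleton_iff] at hx hy
  rcases hx with rfl | rfl | rfl | rfl <;> rcases hy with rfl | rfl | rfl | rfl <;>
    first
      | omega
      | (rw [SimpleGraph.dist_comm]; omega)
      | (rw [SimpleGraph.dist_self]; omega)

end BundleProof

/-- **Existence of a bundle in a binary tree with at least 4 leaves.**
Let `G` be a finite tree in which every vertex has degree 1 or 3 (degree is the
number of neighbours, expressed via `Set.ncard` of the neighbour set), and
suppose `G` has at least 4 leaves (vertices of degree 1). Then `G` contains a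
bundle: four distinct leaves, pairwise at graph distance at most 5, among which
some pair is at graph distance exactly 2 (i.e. forms a cherry). -/
theorem binary_tree_has_bundle
    {V : Type*} [Fintype V] (G : SimpleGraph V) (hG : G.IsTree)
    (hdeg : ∀ v : V, (G.neighborSet v).ncard = 1 ∨ (G.neighborSet v).ncard = 3)
    (hleaves : 4 ≤ {v : V | (G.neighborSet v).ncard = 1}.ncard) :
    ∃ x₁ x₂ x₃ x₄ : V,
      x₁ ≠ x₂ ∧ x₁ ≠ x₃ ∧ x₁ ≠ x₄ ∧ x₂ ≠ x₃ ∧ x₂ ≠ x₄ ∧ x₃ ≠ x₄ ∧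
      (G.neighborSet x₁).ncard = 1 ∧ (G.neighborSet x₂).ncard = 1 ∧
      (G.neighborSet x₃).ncard = 1 ∧ (G.neighborSet x₄).ncard = 1 ∧
      (∀ x ∈ ({x₁, x₂, x₃, x₄} : Set V), ∀ y ∈ ({x₁, x₂, x₃, x₄} : Set V),
        G.dist x y ≤ 5) ∧
      (∃ x ∈ ({x₁, x₂, x₃, x₄} : Set V), ∃ y ∈ ({x₁, x₂, x₃, x₄} : Set V),
        x ≠ y ∧ G.dist x y = 2) := by
  classical
  have hc := hG.isConnected
  -- pick a leaf as root
  have hne : {v : V | (G.neighborSet v).ncard = 1}.Nonempty :=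
    Set.nonempty_of_ncard_ne_zero (by omega)
  obtain ⟨r, hrmem⟩ := hne
  have hrl : (G.neighborSet r).ncard = 1 := hrmem
  -- deepest vertex u
  obtain ⟨u, -, humax⟩ :=
    Finset.exists_max_image (Finset.univ : Finset V) (G.dist r) ⟨r, Finset.mem_univ r⟩
  have hmax : ∀ v, G.dist r v ≤ G.dist r u := fun v => humax v (Finset.mem_univ v)
  have hM1 : 1 ≤ G.dist r u := by
    by_contra h
    have hsub : {v : V | (G.neighborSet v).ncard = 1} ⊆ {r} := by
      intro v hv
      have h1 := hmax v
      have h2 : G.dist r v = 0 := by omega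
      exact Set.mem_singleton_iff.mpr (hc.dist_eq_zero_iff.mp h2).symm
    have := Set.ncard_le_ncard hsub (Set.finite_singleton r)
    rw [Set.ncard_singleton] at this
    omega
  have hur : u ≠ r := by
    intro h
    rw [h, SimpleGraph.dist_self] at hM1
    omega
  have hlu : (G.neighborSet u).ncard = 1 := top_leaf hG hdeg hM1 hmax rfl
  -- parent p of u
  obtain ⟨p, hup, hpd⟩ := parent_exists hG hur
  -- p is internal
  have hpint : (G.neighborSet p).ncard = 3 := by
    rcases hdeg p with hp1 | hp3
    · exfalso
      have honly : ∀ x, G.Adj p x → x = u := fun x hx => uniq_nbr hp1 hup.symm hx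
      by_cases hprr : p = r
      · have hp0 : G.dist r p = 0 := by rw [hprr, SimpleGraph.dist_self]
        have hsub : {v : V | (G.neighborSet v).ncard = 1} ⊆ {r, u} := by
          intro v hv
          have hle := hmax v
          rcases (by omega : G.dist r v = 0 ∨ G.dist r v = 1) with h0 | h1
          · left; exact (hc.dist_eq_zero_iff.mp h0).symm
          · right
            have hadj : G.Adj r v := SimpleGraph.dist_eq_one_iff_adj.mp h1
            have hpv : G.Adj p v := by rw [hprr]; exact hadj
            exact honly v hpv
        have := Set.ncard_le_ncard hsub (Set.toFinite _)
        have h2 : ({r, u} : Set V).ncard ≤ 2 := by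
          have := Set.ncard_insert_le r ({u} : Set V)
          rw [Set.ncard_singleton] at this
          omega
        omega
      · obtain ⟨w, hpw, hwd⟩ := parent_exists hG hprr
        have hwu : w = u := honly w hpw
        rw [hwu] at hwd
        omega
    · exact hp3
  have hpr : p ≠ r := by
    intro h
    rw [h, hrl] at hpint
    omega
  -- parent q of p, sibling s of u
  obtain ⟨q, hpq, hqd⟩ := parent_exists hG hpr
  have huq : u ≠ q := by
    intro h
    rw [← h] at hqd
    omega
  obtain ⟨s, hsmem, hsu, hsq⟩ :=
    third_elt hpint (show u ∈ G.neighborSet p from hup.symm)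
      (show q ∈ G.neighborSet p from hpq) huq
  have hps : G.Adj p s := hsmem
  have hsd : G.dist r s = G.dist r u := by
    rcases adj_level hG r hps with hl | hl
    · exact absurd (parent_unique hG hps hpq hl hqd) hsq
    · omega
  have hls : (G.neighborSet s).ncard = 1 := top_leaf hG hdeg hM1 hmax hsd
  have hsp : s ≠ p := by
    intro h
    rw [h] at hsd
    omega
  have hcherry : G.dist u s = 2 := cherry_dist hG hlu hup hps hsu.symm hsp
  -- q is internal
  have hqint : (G.neighborSet q).ncard = 3 := by
    rcases hdeg q with hq1 | hq3
    · exfalso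
      have honly : ∀ x, G.Adj q x → x = p := fun x hx => uniq_nbr hq1 hpq.symm hx
      by_cases hqrr : q = r
      · have hq0 : G.dist r q = 0 := by rw [hqrr, SimpleGraph.dist_self]
        have hsub : {v : V | (G.neighborSet v).ncard = 1} ⊆ {r, u, s} := by
          intro v hv
          have hv1 : (G.neighborSet v).ncard = 1 := hv
          have hle := hmax v
          rcases (by omega : G.dist r v = 0 ∨ G.dist r v = 1 ∨ G.dist r v = 2) with h0 | h1 | h2
          · left; exact (hc.dist_eq_zero_iff.mp h0).symm
          · exfalso
            have hadj : G.Adj r v := SimpleGraph.dist_eq_one_iff_adj.mp h1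
            have hqv : G.Adj q v := by rw [hqrr]; exact hadj
            have : v = p := honly v hqv
            rw [this, hpint] at hv1
            omega
          · have hvr : v ≠ r := by
              intro he
              rw [he, SimpleGraph.dist_self] at h2
              omega
            obtain ⟨w, hvw, hwd⟩ := parent_exists hG hvr
            have hw1 : G.dist r w = 1 := by omega
            have hadj : G.Adj r w := SimpleGraph.dist_eq_one_iff_adj.mp hw1
            have hqw : G.Adj q w := by rw [hqrr]; exact hadj
            have hwp : w = p := honly w hqw
            rw [hwp] at hvw
            have hvmem : v ∈ G.neighborSet p := hvw.symm
            rcases mem_three hpint (show q ∈ G.neighborSet p from hpq)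
              (show u ∈ G.neighborSet p from hup.symm)
              (show s ∈ G.neighborSet p from hps) huq.symm hsq.symm
              (fun he => hsu (he.symm)) hvmem with hq' | hu' | hs'
            · exfalso; rw [hq'] at h2; omega
            · right; left; exact hu'
            · right; right; exact hs'
        have := Set.ncard_le_ncard hsub (Set.toFinite _)
        have h3 : ({r, u, s} : Set V).ncard ≤ 3 := by
          have t1 := Set.ncard_insert_le r ({u, s} : Set V)
          have t2 := Set.ncard_insert_le u ({s} : Set V)
          rw [Set.ncard_singleton] at t2
          omega
        omega
      · obtain ⟨w, hqw, hwd⟩ := parent_exists hG hqrr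
        have hwp : w = p := honly w hqw
        rw [hwp] at hwd
        omega
    · exact hq3
  have hqr : q ≠ r := by
    intro h
    rw [h, hrl] at hqint
    omega
  -- parent t of q, sibling c of p
  obtain ⟨t, hqt, htd⟩ := parent_exists hG hqr
  have hpt : p ≠ t := by
    intro h
    rw [← h] at htd
    omega
  obtain ⟨c, hcmem, hcp, hct⟩ :=
    third_elt hqint (show p ∈ G.neighborSet q from hpq.symm)
      (show t ∈ G.neighborSet q from hqt) hpt
  have hqc : G.Adj q c := hcmem
  have hcd : G.dist r c = G.dist r q + 1 := by
    rcases adj_level hG r hqc with hl | hl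
    · exact absurd (parent_unique hG hqc hqt hl htd) hct
    · omega
  -- case on c
  rcases hdeg c with hc1 | hc3
  · -- c is a leaf; look at t
    by_cases htr : t = r
    · -- t = r : the four leaves are u, s, r, c
      have hqr2 : G.Adj q r := htr ▸ hqt
      refine package hG hsu.symm hur ?_ ?_ ?_ ?_ hlu hls hrl hc1 hcherry
        (by have := chain3 hG hup hpq hqr2; omega)
        (by have := chain3 hG hup hpq hqc; omega)
        (by have := chain3 hG hps.symm hpq hqr2; omega)
        (by have := chain3 hG hps.symm hpq hqc; omega)
        (by have := chain2 hG hqr2.symm hqc; omega)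
      · intro h; rw [h] at hpd; omega
      · intro h; rw [h, SimpleGraph.dist_self] at hsd; omega
      · intro h; rw [h] at hsd; omega
      · intro h; rw [← h, SimpleGraph.dist_self] at hcd; omega
    · -- t ≠ r : t is internal
      have htint : (G.neighborSet t).ncard = 3 := by
        rcases hdeg t with ht1 | ht3
        · exfalso
          obtain ⟨w, htw, hwd⟩ := parent_exists hG htr
          have : w = q := uniq_nbr ht1 hqt.symm htw
          rw [this] at hwd
          omega
        · exact ht3
      obtain ⟨w0, htw0, hw0d⟩ := parent_exists hG htr
      have hqw0 : q ≠ w0 := by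
        intro h
        rw [← h] at hw0d
        omega
      obtain ⟨g, hgmem, hgq, hgw0⟩ :=
        third_elt htint (show q ∈ G.neighborSet t from hqt.symm)
          (show w0 ∈ G.neighborSet t from htw0) hqw0
      have htg : G.Adj t g := hgmem
      have hgd : G.dist r g = G.dist r t + 1 := by
        rcases adj_level hG r htg with hl | hl
        · exact absurd (parent_unique hG htg htw0 hl hw0d) hgw0
        · omega
      rcases hdeg g with hg1 | hg3
      · -- g leaf : four leaves u, s, c, g
        refine package hG hsu.symm ?_ ?_ ?_ ?_ ?_ hlu hls hc1 hg1 hcherry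
          (by have := chain3 hG hup hpq hqc; omega)
          (by have := chain4 hG hup hpq hqt htg; omega)
          (by have := chain3 hG hps.symm hpq hqc; omega)
          (by have := chain4 hG hps.symm hpq hqt htg; omega)
          (by have := chain3 hG hqc.symm hqt htg; omega)
        · intro h; rw [h] at hpd; omega
        · intro h; rw [h] at hpd; omega
        · intro h; rw [h] at hsd; omega
        · intro h; rw [h] at hsd; omega
        · intro h; rw [h] at hcd; omega
      · -- g internal : children h, i of g
        obtain ⟨h1, h2, h1m, h2m, hh12, h1t, h2t⟩ :=
          two_others hg3 (show t ∈ G.neighborSet g from htg.symm)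
        have hgh1 : G.Adj g h1 := h1m
        have hgh2 : G.Adj g h2 := h2m
        have h1d : G.dist r h1 = G.dist r g + 1 := by
          rcases adj_level hG r hgh1 with hl | hl
          · exact absurd (parent_unique hG hgh1 htg.symm hl (by omega)) h1t
          · omega
        have h2d : G.dist r h2 = G.dist r g + 1 := by
          rcases adj_level hG r hgh2 with hl | hl
          · exact absurd (parent_unique hG hgh2 htg.symm hl (by omega)) h2t
          · omega
        rcases hdeg h1 with hh1l | hh1i <;> rcases hdeg h2 with hh2l | hh2i
        · -- both h1 h2 leaves : u, s, h1, h2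
          refine package hG hsu.symm ?_ ?_ ?_ ?_ hh12 hlu hls hh1l hh2l hcherry
            (chain5 hG hup hpq hqt htg hgh1)
            (chain5 hG hup hpq hqt htg hgh2)
            (chain5 hG hps.symm hpq hqt htg hgh1)
            (chain5 hG hps.symm hpq hqt htg hgh2)
            (by have := chain2 hG hgh1.symm hgh2; omega)
          · intro h; rw [h] at hpd; omega
          · intro h; rw [h] at hpd; omega
          · intro h; rw [h] at hsd; omega
          · intro h; rw [h] at hsd; omega
        · -- h1 leaf, h2 internal with leaf children j k : j, k, c, h1
          obtain ⟨j, k, hjk, h2j, h2k, hjd, hkd, hlj, hlk⟩ :=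
            resolve hG hdeg hmax hgh2.symm (by omega) (by omega) hh2i
          have hkh2 : k ≠ h2 := by intro h; rw [h] at hkd; omega
          refine package hG hjk ?_ ?_ ?_ ?_ ?_ hlj hlk hc1 hh1l
            (cherry_dist hG hlj h2j.symm h2k hjk hkh2)
            (by have := chain5 hG h2j.symm hgh2.symm htg.symm hqt.symm hqc; omega)
            (by have := chain3 hG h2j.symm hgh2.symm hgh1; omega)
            (by have := chain5 hG h2k.symm hgh2.symm htg.symm hqt.symm hqc; omega)
            (by have := chain3 hG h2k.symm hgh2.symm hgh1; omega)
            (by have := chain4 hG hqc.symm hqt htg hgh1; omega)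
          · intro h; rw [h] at hjd; omega
          · intro h; rw [h] at hjd; omega
          · intro h; rw [h] at hkd; omega
          · intro h; rw [h] at hkd; omega
          · exact leaf_ne hc1 hqc.symm hgh1.symm hgq.symm
        · -- h1 internal with leaf children j k, h2 leaf : j, k, c, h2
          obtain ⟨j, k, hjk, h1j, h1k, hjd, hkd, hlj, hlk⟩ :=
            resolve hG hdeg hmax hgh1.symm (by omega) (by omega) hh1i
          have hkh1 : k ≠ h1 := by intro h; rw [h] at hkd; omega
          refine package hG hjk ?_ ?_ ?_ ?_ ?_ hlj hlk hc1 hh2l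
            (cherry_dist hG hlj h1j.symm h1k hjk hkh1)
            (by have := chain5 hG h1j.symm hgh1.symm htg.symm hqt.symm hqc; omega)
            (by have := chain3 hG h1j.symm hgh1.symm hgh2; omega)
            (by have := chain5 hG h1k.symm hgh1.symm htg.symm hqt.symm hqc; omega)
            (by have := chain3 hG h1k.symm hgh1.symm hgh2; omega)
            (by have := chain4 hG hqc.symm hqt htg hgh2; omega)
          · intro h; rw [h] at hjd; omega
          · intro h; rw [h] at hjd; omega
          · intro h; rw [h] at hkd; omega
          · intro h; rw [h] at hkd; omega
          · exact leaf_ne hc1 hqc.symm hgh2.symm hgq.symm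
        · -- both internal : children j k of h1 and l m of h2
          obtain ⟨j, k, hjk, h1j, h1k, hjd, hkd, hlj, hlk⟩ :=
            resolve hG hdeg hmax hgh1.symm (by omega) (by omega) hh1i
          obtain ⟨l, m, hlm, h2l, h2m, hld, hmd, hll, hlm'⟩ :=
            resolve hG hdeg hmax hgh2.symm (by omega) (by omega) hh2i
          have hkh1 : k ≠ h1 := by intro h; rw [h] at hkd; omega
          refine package hG hjk ?_ ?_ ?_ ?_ hlm hlj hlk hll hlm'
            (cherry_dist hG hlj h1j.symm h1k hjk hkh1)
            (by have := chain4 hG h1j.symm hgh1.symm hgh2 h2l; omega)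
            (by have := chain4 hG h1j.symm hgh1.symm hgh2 h2m; omega)
            (by have := chain4 hG h1k.symm hgh1.symm hgh2 h2l; omega)
            (by have := chain4 hG h1k.symm hgh1.symm hgh2 h2m; omega)
            (by have := chain2 hG h2l.symm h2m; omega)
          · exact leaf_ne hlj h1j.symm h2l.symm hh12
          · exact leaf_ne hlj h1j.symm h2m.symm hh12
          · exact leaf_ne hlk h1k.symm h2l.symm hh12
          · exact leaf_ne hlk h1k.symm h2m.symm hh12
  · -- c internal : its two children a b are leaves; four leaves u, s, a, b
    obtain ⟨a, b, hab, hca, hcb, hda, hdb, hla, hlb⟩ :=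
      resolve hG hdeg hmax hqc.symm (by omega) (by omega) hc3
    refine package hG hsu.symm ?_ ?_ ?_ ?_ hab hlu hls hla hlb hcherry
      (by have := chain4 hG hup hpq hqc hca; omega)
      (by have := chain4 hG hup hpq hqc hcb; omega)
      (by have := chain4 hG hps.symm hpq hqc hca; omega)
      (by have := chain4 hG hps.symm hpq hqc hcb; omega)
      (by have := chain2 hG hca.symm hcb; omega)
    · exact leaf_ne hlu hup hca.symm hcp.symm
    · exact leaf_ne hlu hup hcb.symm hcp.symm
    · exact leaf_ne hls hps.symm hca.symm hcp.symm
    · exact leaf_ne hls hps.symm hcb.symm hcp.symm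
end
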